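/- arXiv:2301.01549 — 9 statements merged into one kernel-verified Lean document; each statement's English description precedes it below -/
import Mathlib

section
/- For any measurable function b of the covariates X such that X is conditionally independent of T given b(X) (i.e., b is a balancing score), if (Y(0), Y(1)) ⫫ T | X, then (Y(0), Y(1)) ⫫ T | b(X), provided (Y(0), Y(1)) ⫫ T | (X, b(X)) reduces appropriately; formally, if (Y(0),Y(1)) ⫫ T | X and T ⫫ X | b(X), then (Y(0),Y(1)) ⫫ T | b(X). -/
open MeasureTheory ProbabilityTheory MeasurableSpace

section Aux

open scoped NNReal

/-- Auxiliary: conditional expectations of indicators are a.e. bounded by 1. -/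
lemma aux_condexp_indicator_bdd
    {Ω : Type*} {mΩ : MeasurableSpace Ω} {μ : Measure Ω} [IsProbabilityMeasure μ]
    (m : MeasurableSpace Ω) (B : Set Ω) :
    ∀ᵐ ω ∂μ, ‖(μ⟦B | m⟧) ω‖ ≤ (1 : ℝ) := by
  have h1 : ∀ᵐ ω ∂μ, |Set.indicator B (fun _ => (1:ℝ)) ω| ≤ ((1 : ℝ≥0) : ℝ) := by
    filter_upwards with ω
    by_cases h : ω ∈ B <;> simp [h]
  filter_upwards [ae_bdd_condExp_of_ae_bdd h1] with ω hω
  simpa [Real.norm_eq_abs] using hω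

/-- Auxiliary: the abstract form of the balancing score argument. -/
lemma aux_balancing
    {Ω : Type*} {mΩ : MeasurableSpace Ω} {μ : Measure Ω} [IsProbabilityMeasure μ]
    {β γ : Type*} [MeasurableSpace β] [MeasurableSpace γ]
    {f : Ω → β} {g : Ω → γ}
    {mB mX : MeasurableSpace Ω} (hBX : mB ≤ mX) (hXle : mX ≤ mΩ) (hBle : mB ≤ mΩ)
    (hf : @Measurable Ω β mΩ _ f) (hg : @Measurable Ω γ mΩ _ g)
    (hUnconf : ∀ s t, MeasurableSet s → MeasurableSet t →
      (μ⟦f ⁻¹' s ∩ g ⁻¹' t | mX⟧) =ᵐ[μ]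
        fun ω => (μ⟦f ⁻¹' s | mX⟧) ω * (μ⟦g ⁻¹' t | mX⟧) ω)
    (hBal : ∀ (t : Set γ) (u : Set Ω), MeasurableSet t → MeasurableSet[mX] u →
      (μ⟦g ⁻¹' t ∩ u | mB⟧) =ᵐ[μ]
        fun ω => (μ⟦g ⁻¹' t | mB⟧) ω * (μ⟦u | mB⟧) ω) :
    ∀ s t, MeasurableSet s → MeasurableSet t →
      (μ⟦f ⁻¹' s ∩ g ⁻¹' t | mB⟧) =ᵐ[μ]
        fun ω => (μ⟦f ⁻¹' s | mB⟧) ω * (μ⟦g ⁻¹' t | mB⟧) ω := by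
  letI _inst : MeasurableSpace Ω := mΩ
  -- Key: conditioning `g ⁻¹' t` on `mX` is the same as conditioning on `mB`
  have key : ∀ t : Set γ, MeasurableSet t →
      (μ⟦g ⁻¹' t | mX⟧) =ᵐ[μ] (μ⟦g ⁻¹' t | mB⟧) := by
    intro t ht
    have hBt : MeasurableSet[mΩ] (g ⁻¹' t) := hg ht
    refine (ae_eq_condExp_of_forall_setIntegral_eq hXle
      ((integrable_const (1:ℝ)).indicator hBt)
      (fun s _ _ => integrable_condExp.integrableOn) ?_
      ((stronglyMeasurable_condExp.mono hBX).aestronglyMeasurable)).symm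
    intro u hu _
    have hsmeas : MeasurableSet[mΩ] u := hXle u hu
    have hmul := condExp_stronglyMeasurable_mul_of_bound (μ := μ) hBle
      (stronglyMeasurable_condExp (f := Set.indicator (g ⁻¹' t) fun _ => (1:ℝ)))
      ((integrable_const (1:ℝ)).indicator hsmeas) 1 (aux_condexp_indicator_bdd mB (g ⁻¹' t))
    calc ∫ ω in u, (μ⟦g ⁻¹' t | mB⟧) ω ∂μ
        = ∫ ω, ((μ⟦g ⁻¹' t | mB⟧) * Set.indicator u fun _ => (1:ℝ)) ω ∂μ := by
          rw [← integral_indicator hsmeas]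
          congr 1; funext ω
          by_cases h : ω ∈ u <;> simp [h]
      _ = ∫ ω, (μ[(μ⟦g ⁻¹' t | mB⟧) * Set.indicator u fun _ => (1:ℝ) | mB]) ω ∂μ :=
          (integral_condExp hBle).symm
      _ = ∫ ω, ((μ⟦g ⁻¹' t | mB⟧) ω * (μ⟦u | mB⟧) ω) ∂μ := integral_congr_ae hmul
      _ = ∫ ω, (μ⟦g ⁻¹' t ∩ u | mB⟧) ω ∂μ :=
          integral_congr_ae ((hBal t u ht hu).symm)
      _ = ∫ ω, Set.indicator (g ⁻¹' t ∩ u) (fun _ => (1:ℝ)) ω ∂μ := integral_condExp hBle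
      _ = ∫ ω in u, Set.indicator (g ⁻¹' t) (fun _ => (1:ℝ)) ω ∂μ := by
          rw [← integral_indicator hsmeas]
          congr 1; funext ω
          by_cases h1 : ω ∈ g ⁻¹' t <;> by_cases h2 : ω ∈ u <;>
            simp [h1, h2, Set.indicator_apply]
  -- Main argument
  intro s t hs ht
  have h1 : (μ⟦f ⁻¹' s ∩ g ⁻¹' t | mB⟧)
      =ᵐ[μ] μ[(μ⟦f ⁻¹' s ∩ g ⁻¹' t | mX⟧) | mB] :=
    (condExp_condExp_of_le hBX hXle).symm
  have h2 := condExp_congr_ae (m := mB) (hUnconf s t hs ht)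
  have h3 : (fun ω => (μ⟦f ⁻¹' s | mX⟧) ω * (μ⟦g ⁻¹' t | mX⟧) ω)
      =ᵐ[μ] (μ⟦g ⁻¹' t | mB⟧) * (μ⟦f ⁻¹' s | mX⟧) := by
    filter_upwards [key t ht] with ω hω
    simp only [Pi.mul_apply]
    rw [hω, mul_comm]
  have h4 := condExp_congr_ae (m := mB) h3
  have h5 := condExp_stronglyMeasurable_mul_of_bound (μ := μ) hBle
    (stronglyMeasurable_condExp (f := Set.indicator (g ⁻¹' t) fun _ => (1:ℝ)))
    (integrable_condExp (f := Set.indicator (f ⁻¹' s) fun _ => (1:ℝ)) (m := mX))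
    1 (aux_condexp_indicator_bdd mB (g ⁻¹' t))
  have h6 : μ[(μ⟦f ⁻¹' s | mX⟧) | mB] =ᵐ[μ] (μ⟦f ⁻¹' s | mB⟧) :=
    condExp_condExp_of_le hBX hXle
  refine (((h1.trans h2).trans h4).trans h5).trans ?_
  filter_upwards [h6] with ω hω
  simp only [Pi.mul_apply]
  rw [hω, mul_comm]

end Aux

/-- If `(Y(0),Y(1)) ⫫ T | X` (unconfoundedness) and `T ⫫ X | b(X)`
(`b` is a balancing score), then `(Y(0),Y(1)) ⫫ T | b(X)`. -/
theorem balancing_score_preserves_unconfoundedness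
    {Ω : Type*} [MeasurableSpace Ω] [StandardBorelSpace Ω]
    {μ : Measure Ω} [IsProbabilityMeasure μ]
    {p k : ℕ} (X : Ω → (Fin p → ℝ)) (T : Ω → ℝ) (Y0 Y1 : Ω → ℝ)
    (b : (Fin p → ℝ) → (Fin k → ℝ))
    (hX : Measurable X) (hT : Measurable T)
    (hY0 : Measurable Y0) (hY1 : Measurable Y1) (hb : Measurable b)
    (hTbin : ∀ ω, T ω = 0 ∨ T ω = 1)
    -- unconfoundedness: (Y(0), Y(1)) ⫫ T | X
    (hUnconf : CondIndepFun (MeasurableSpace.comap X inferInstance) hX.comap_le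
      (fun ω => (Y0 ω, Y1 ω)) T μ)
    -- balancing score: T ⫫ X | b(X)
    (hBal : CondIndepFun (MeasurableSpace.comap (fun ω => b (X ω)) inferInstance)
      (hb.comp hX).comap_le T X μ) :
    CondIndepFun (MeasurableSpace.comap (fun ω => b (X ω)) inferInstance)
      (hb.comp hX).comap_le (fun ω => (Y0 ω, Y1 ω)) T μ := by
  have hY : Measurable (fun ω => (Y0 ω, Y1 ω)) := hY0.prodMk hY1
  have hBX : MeasurableSpace.comap (fun ω => b (X ω)) inferInstance ≤
      MeasurableSpace.comap X inferInstance := by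
    rintro _ ⟨s, hs, rfl⟩
    exact ⟨b ⁻¹' s, hb hs, rfl⟩
  rw [condIndepFun_iff_condExp_inter_preimage_eq_mul hY hT] at hUnconf ⊢
  rw [condIndepFun_iff_condExp_inter_preimage_eq_mul hT hX] at hBal
  refine aux_balancing hBX hX.comap_le (hb.comp hX).comap_le hY hT hUnconf ?_
  rintro t _ ht ⟨u, hu, rfl⟩
  exact hBal t u ht hu
end

section
/- The propensity score e(X) = P(T = 1 | X) is a balancing score: X is conditionally independent of T given e(X). -/
open MeasureTheory ProbabilityTheory MeasurableSpace

/-- The propensity score `e(X) = P(T = 1 | X) = E[T | σ(X)]` is a balancing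
score: `X ⫫ T | e(X)`. -/
theorem propensity_score_is_balancing_score
    {Ω : Type*} [MeasurableSpace Ω] [StandardBorelSpace Ω]
    {μ : Measure Ω} [IsProbabilityMeasure μ]
    {p : ℕ} (X : Ω → (Fin p → ℝ)) (T : Ω → ℝ) (e : Ω → ℝ)
    (hX : Measurable X) (hT : Measurable T) (he : Measurable e)
    (hTbin : ∀ ω, T ω = 0 ∨ T ω = 1)
    -- e is (a version of) the propensity score E[T | σ(X)]
    (he_eq : e =ᵐ[μ] μ[T | MeasurableSpace.comap X inferInstance])
    -- e(X) is a measurable function of X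
    (he_of_X : MeasurableSpace.comap e inferInstance ≤ MeasurableSpace.comap X inferInstance) :
    CondIndepFun (MeasurableSpace.comap e inferInstance) he.comap_le X T μ := by
  have hme := he.comap_le
  have hmx := hX.comap_le
  have heE : StronglyMeasurable[MeasurableSpace.comap e inferInstance] e :=
    (measurable_iff_comap_le.mpr le_rfl).stronglyMeasurable
  have hTi : Integrable T μ := by
    refine Integrable.mono' (integrable_const 1) hT.aestronglyMeasurable
      (ae_of_all _ fun ω => ?_)
    rcases hTbin ω with h | h <;> simp [h]
  have hei : Integrable e μ := integrable_condExp.congr he_eq.symm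
  -- e is a version of E[T | σ(e)]
  have key1 : μ[T | MeasurableSpace.comap e inferInstance] =ᵐ[μ] e := by
    calc μ[T | MeasurableSpace.comap e inferInstance]
        =ᵐ[μ] μ[μ[T | MeasurableSpace.comap X inferInstance]
            | MeasurableSpace.comap e inferInstance] :=
          (condExp_condExp_of_le he_of_X hmx).symm
    _ =ᵐ[μ] μ[e | MeasurableSpace.comap e inferInstance] := condExp_congr_ae he_eq.symm
    _ = e := condExp_of_stronglyMeasurable hme heE hei
  have hIB : (T ⁻¹' {1}).indicator (fun _ => (1 : ℝ)) = T := by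
    funext ω
    rcases hTbin ω with h | h
    · have hω : ω ∉ T ⁻¹' {1} := by simp [h]
      simp [Set.indicator_of_notMem hω, h]
    · have hω : ω ∈ T ⁻¹' {1} := by simp [h]
      simp [Set.indicator_of_mem hω, h]
  have keyB : (μ⟦T ⁻¹' {1} | MeasurableSpace.comap e inferInstance⟧) =ᵐ[μ] e := by
    rw [hIB]; exact key1
  -- core computation for A ∈ σ(X)
  have core : ∀ s : Set (Fin p → ℝ), MeasurableSet s →
      (μ[(X ⁻¹' s).indicator (fun _ => (1:ℝ)) * T | MeasurableSpace.comap e inferInstance])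
        =ᵐ[μ] fun ω => e ω *
          (μ⟦X ⁻¹' s | MeasurableSpace.comap e inferInstance⟧) ω := by
    intro s hs
    have hA : MeasurableSet[MeasurableSpace.comap X inferInstance] (X ⁻¹' s) := ⟨s, hs, rfl⟩
    have hIA_sm : StronglyMeasurable[MeasurableSpace.comap X inferInstance]
        ((X ⁻¹' s).indicator (fun _ => (1:ℝ))) :=
      stronglyMeasurable_const.indicator hA
    have hIAi : Integrable ((X ⁻¹' s).indicator (fun _ => (1:ℝ))) μ := by
      refine Integrable.mono' (integrable_const 1)
        ((hIA_sm.mono hmx).aestronglyMeasurable) (ae_of_all _ fun ω => ?_)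
      by_cases h : ω ∈ X ⁻¹' s <;> simp [h]
    have hIATi : Integrable ((X ⁻¹' s).indicator (fun _ => (1:ℝ)) * T) μ := by
      refine Integrable.mono' hTi.abs
        (((hIA_sm.mono hmx).mul hT.stronglyMeasurable).aestronglyMeasurable)
        (ae_of_all _ fun ω => ?_)
      by_cases h : ω ∈ X ⁻¹' s <;> simp [h, abs_nonneg]
    have heIAi : Integrable (e * (X ⁻¹' s).indicator (fun _ => (1:ℝ))) μ := by
      refine Integrable.mono' hei.abs
        (((heE.mono hme).mul (hIA_sm.mono hmx)).aestronglyMeasurable)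
        (ae_of_all _ fun ω => ?_)
      by_cases h : ω ∈ X ⁻¹' s <;> simp [h, abs_nonneg]
    have step1 : μ[(X ⁻¹' s).indicator (fun _ => (1:ℝ)) * T
        | MeasurableSpace.comap X inferInstance]
          =ᵐ[μ] e * (X ⁻¹' s).indicator (fun _ => (1:ℝ)) := by
      calc μ[(X ⁻¹' s).indicator (fun _ => (1:ℝ)) * T | MeasurableSpace.comap X inferInstance]
          =ᵐ[μ] (X ⁻¹' s).indicator (fun _ => (1:ℝ))
            * μ[T | MeasurableSpace.comap X inferInstance] :=
            condExp_mul_of_stronglyMeasurable_left hIA_sm hIATi hTi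
      _ =ᵐ[μ] e * (X ⁻¹' s).indicator (fun _ => (1:ℝ)) := by
            filter_upwards [he_eq] with ω hω
            simp only [Pi.mul_apply, mul_comm, hω]
    calc μ[(X ⁻¹' s).indicator (fun _ => (1:ℝ)) * T | MeasurableSpace.comap e inferInstance]
        =ᵐ[μ] μ[μ[(X ⁻¹' s).indicator (fun _ => (1:ℝ)) * T
            | MeasurableSpace.comap X inferInstance] | MeasurableSpace.comap e inferInstance] :=
          (condExp_condExp_of_le he_of_X hmx).symm
    _ =ᵐ[μ] μ[e * (X ⁻¹' s).indicator (fun _ => (1:ℝ))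
          | MeasurableSpace.comap e inferInstance] := condExp_congr_ae step1
    _ =ᵐ[μ] e * μ[(X ⁻¹' s).indicator (fun _ => (1:ℝ))
          | MeasurableSpace.comap e inferInstance] :=
          condExp_mul_of_stronglyMeasurable_left heE heIAi hIAi
  -- indicator identity: 1_{A ∩ {T=1}} = 1_A * T
  have hAB : ∀ s : Set (Fin p → ℝ),
      (X ⁻¹' s ∩ T ⁻¹' {1}).indicator (fun _ => (1:ℝ))
        = (X ⁻¹' s).indicator (fun _ => (1:ℝ)) * T := by
    intro s
    funext ω
    by_cases hA : ω ∈ X ⁻¹' s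
    · rcases hTbin ω with h | h
      · have hω : ω ∉ X ⁻¹' s ∩ T ⁻¹' {1} := by simp [h]
        simp [Set.indicator_of_notMem hω, hA, h]
      · have hω : ω ∈ X ⁻¹' s ∩ T ⁻¹' {1} := ⟨hA, by simp [h]⟩
        simp [Set.indicator_of_mem hω, hA, h]
    · have hω : ω ∉ X ⁻¹' s ∩ T ⁻¹' {1} := fun hc => hA hc.1
      simp [Set.indicator_of_notMem hω, hA]
  have hcoreB : ∀ s : Set (Fin p → ℝ), MeasurableSet s →
      (μ⟦X ⁻¹' s ∩ T ⁻¹' {1} | MeasurableSpace.comap e inferInstance⟧)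
        =ᵐ[μ] fun ω => e ω * (μ⟦X ⁻¹' s | MeasurableSpace.comap e inferInstance⟧) ω := by
    intro s hs
    have h := core s hs
    rw [← hAB s] at h
    exact h
  rw [condIndepFun_iff_condExp_inter_preimage_eq_mul hX hT]
  intro s t hs ht
  by_cases h1 : (1:ℝ) ∈ t <;> by_cases h0 : (0:ℝ) ∈ t
  · -- both: T⁻¹ t = univ
    have ht' : T ⁻¹' t = Set.univ := by
      ext ω; rcases hTbin ω with h | h <;> simp [h, h0, h1]
    rw [ht', Set.inter_univ, Set.indicator_univ]
    have huniv : μ[(fun _ => (1:ℝ)) | MeasurableSpace.comap e inferInstance]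
        = fun _ => (1:ℝ) := condExp_const hme 1
    rw [huniv]
    filter_upwards with ω
    simp
  · -- only 1: T⁻¹ t = {T = 1}
    have ht' : T ⁻¹' t = T ⁻¹' {1} := by
      ext ω; rcases hTbin ω with h | h <;> simp [h, h0, h1]
    rw [ht']
    filter_upwards [hcoreB s hs, keyB] with ω hω₁ hω₂
    rw [hω₁, hω₂, mul_comm]
  · -- only 0: T⁻¹ t = {T = 1}ᶜ
    have ht' : T ⁻¹' t = (T ⁻¹' {1})ᶜ := by
      ext ω; rcases hTbin ω with h | h <;> simp [h, h0, h1]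
    rw [ht']
    have hA : MeasurableSet[MeasurableSpace.comap X inferInstance] (X ⁻¹' s) := ⟨s, hs, rfl⟩
    have hIAi : Integrable ((X ⁻¹' s).indicator (fun _ => (1:ℝ))) μ := by
      refine Integrable.mono' (integrable_const 1)
        (((stronglyMeasurable_const.indicator hA).mono hmx).aestronglyMeasurable)
        (ae_of_all _ fun ω => ?_)
      by_cases h : ω ∈ X ⁻¹' s <;> simp [h]
    have hIABi : Integrable ((X ⁻¹' s ∩ T ⁻¹' {1}).indicator (fun _ => (1:ℝ))) μ := by
      refine Integrable.mono' (integrable_const 1)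
        ((stronglyMeasurable_const.indicator
          ((hX hs).inter (hT (measurableSet_singleton 1)))).aestronglyMeasurable)
        (ae_of_all _ fun ω => ?_)
      by_cases h : ω ∈ X ⁻¹' s ∩ T ⁻¹' {1} <;> simp [h]
    have hsplit : (X ⁻¹' s ∩ (T ⁻¹' {1})ᶜ).indicator (fun _ => (1:ℝ))
        = (X ⁻¹' s).indicator (fun _ => (1:ℝ))
          - (X ⁻¹' s ∩ T ⁻¹' {1}).indicator (fun _ => (1:ℝ)) := by
      funext ω
      by_cases hA' : ω ∈ X ⁻¹' s <;> by_cases hB : ω ∈ T ⁻¹' {1} <;>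
        simp [hA', hB, Set.indicator_apply]
    have hBc : ((T ⁻¹' {1})ᶜ).indicator (fun _ => (1:ℝ))
        = (fun _ => (1:ℝ)) - (T ⁻¹' {1}).indicator (fun _ => (1:ℝ)) := by
      funext ω
      by_cases hB : ω ∈ T ⁻¹' {1} <;> simp [hB, Set.indicator_apply]
    have hBc' : (μ⟦(T ⁻¹' {1})ᶜ | MeasurableSpace.comap e inferInstance⟧)
        =ᵐ[μ] fun ω => 1 - e ω := by
      rw [hBc]
      calc μ[(fun _ => (1:ℝ)) - (T ⁻¹' {1}).indicator (fun _ => (1:ℝ))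
            | MeasurableSpace.comap e inferInstance]
          =ᵐ[μ] μ[(fun _ => (1:ℝ)) | MeasurableSpace.comap e inferInstance]
            - μ[(T ⁻¹' {1}).indicator (fun _ => (1:ℝ))
              | MeasurableSpace.comap e inferInstance] :=
            condExp_sub (integrable_const 1) (by rw [hIB]; exact hTi) _
      _ =ᵐ[μ] fun ω => 1 - e ω := by
            rw [condExp_const hme (1:ℝ)]
            filter_upwards [keyB] with ω hω
            simp [hω]
    rw [hsplit]
    calc μ[(X ⁻¹' s).indicator (fun _ => (1:ℝ))
          - (X ⁻¹' s ∩ T ⁻¹' {1}).indicator (fun _ => (1:ℝ))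
          | MeasurableSpace.comap e inferInstance]
        =ᵐ[μ] (μ⟦X ⁻¹' s | MeasurableSpace.comap e inferInstance⟧)
          - (μ⟦X ⁻¹' s ∩ T ⁻¹' {1} | MeasurableSpace.comap e inferInstance⟧) :=
          condExp_sub hIAi hIABi _
    _ =ᵐ[μ] fun ω => (μ⟦X ⁻¹' s | MeasurableSpace.comap e inferInstance⟧) ω
          * (μ⟦(T ⁻¹' {1})ᶜ | MeasurableSpace.comap e inferInstance⟧) ω := by
        filter_upwards [hcoreB s hs, hBc'] with ω hω₁ hω₂
        simp only [Pi.sub_apply, hω₁, hω₂]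
        ring
  · -- neither: T⁻¹ t = ∅
    have ht' : T ⁻¹' t = ∅ := by
      ext ω; rcases hTbin ω with h | h <;> simp [h, h0, h1]
    rw [ht', Set.inter_empty]
    have hz : (μ⟦(∅ : Set Ω) | MeasurableSpace.comap e inferInstance⟧)
        = fun _ => (0:ℝ) := by
      rw [Set.indicator_empty]
      exact condExp_const hme (0:ℝ)
    rw [hz]
    filter_upwards with ω
    simp
end

section
/- Any balancing score is finer than the propensity score: if b is a measurable function of X with X ⫫ T | b(X), then the propensity score e(X) = P(T=1|X) is (almost surely) a measurable function of b(X); i.e., E[T | X] = E[T | b(X)] almost surely. -/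
open MeasureTheory ProbabilityTheory MeasurableSpace

lemma balancing_aux
    {Ω : Type*} {m' : MeasurableSpace Ω} {mΩ : MeasurableSpace Ω} [StandardBorelSpace Ω]
    {μ : Measure Ω} [IsProbabilityMeasure μ]
    {p : ℕ} (hm' : m' ≤ mΩ)
    {X : Ω → (Fin p → ℝ)} (hX : Measurable[mΩ] X)
    (hm'X : m' ≤ MeasurableSpace.comap X inferInstance)
    {T : Ω → ℝ} (hT : Measurable[mΩ] T)
    (hTbin : ∀ ω, T ω = 0 ∨ T ω = 1)
    (hBal : CondIndepFun m' hm' X T μ) :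
    μ[T | MeasurableSpace.comap X inferInstance] =ᵐ[μ] μ[T | m'] := by
  have hmX : MeasurableSpace.comap X inferInstance ≤ mΩ := hX.comap_le
  have ht : MeasurableSet[mΩ] (T ⁻¹' {1}) := hT (measurableSet_singleton 1)
  have hTind : T = (T ⁻¹' {1}).indicator (fun _ => (1 : ℝ)) := by
    funext ω
    rcases hTbin ω with h0 | h1
    · rw [Set.indicator_of_notMem]
      · exact h0
      · simp [h0]
    · rw [Set.indicator_of_mem]
      · exact h1
      · simpa using h1
  have hTint : Integrable T μ := by
    rw [hTind]
    exact (integrable_const (1 : ℝ)).indicator ht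
  have hCI := (condIndepFun_iff_condExp_inter_preimage_eq_mul (m' := m') (hm' := hm')
    hX hT).mp hBal
  symm
  refine ae_eq_condExp_of_forall_setIntegral_eq hmX hTint
    (fun s _ _ => integrable_condExp.integrableOn) (fun s hs _ => ?_)
    (StronglyMeasurable.aestronglyMeasurable
      (stronglyMeasurable_condExp.mono hm'X))
  obtain ⟨A, hA, rfl⟩ := hs
  have hsmeas : MeasurableSet[mΩ] (X ⁻¹' A) := hX hA
  have hRHS : ∫ x in X ⁻¹' A, T x ∂μ = (μ (X ⁻¹' A ∩ T ⁻¹' {1})).toReal := by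
    conv_lhs => rw [hTind]
    rw [setIntegral_indicator ht]
    simp [Measure.real]
  have key := hCI A {1} hA (measurableSet_singleton 1)
  have hIint : Integrable ((X ⁻¹' A).indicator (fun _ => (1 : ℝ))) μ :=
    (integrable_const (1 : ℝ)).indicator hsmeas
  have hmul_int : Integrable ((μ[T|m']) * (X ⁻¹' A).indicator (fun _ => (1 : ℝ))) μ := by
    have h1 : Integrable ((X ⁻¹' A).indicator (fun _ => (1 : ℝ)) * (μ[T|m'])) μ :=
      integrable_condExp.bdd_mul hIint.aestronglyMeasurable
        (c := 1) (Filter.Eventually.of_forall fun ω => by by_cases hx : ω ∈ X ⁻¹' A <;> simp [hx])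
    exact h1.congr (Filter.Eventually.of_forall fun ω => mul_comm _ _)
  have hpull : μ[(μ[T|m']) * (X ⁻¹' A).indicator (fun _ => (1 : ℝ)) | m']
      =ᵐ[μ] (μ[T|m']) * μ[(X ⁻¹' A).indicator (fun _ => (1 : ℝ)) | m'] :=
    condExp_mul_of_stronglyMeasurable_left stronglyMeasurable_condExp hmul_int hIint
  calc ∫ x in X ⁻¹' A, (μ[T|m']) x ∂μ
      = ∫ x, ((μ[T|m']) * (X ⁻¹' A).indicator (fun _ => (1 : ℝ))) x ∂μ := by
        rw [← integral_indicator hsmeas]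
        congr 1
        funext x
        by_cases hx : x ∈ X ⁻¹' A <;> simp [hx]
    _ = ∫ x, (μ[(μ[T|m']) * (X ⁻¹' A).indicator (fun _ => (1 : ℝ)) | m']) x ∂μ := by
        rw [integral_condExp hm']
    _ = ∫ x, ((μ[T|m']) * μ[(X ⁻¹' A).indicator (fun _ => (1 : ℝ)) | m']) x ∂μ :=
        integral_congr_ae hpull
    _ = ∫ x, (μ[(X ⁻¹' A ∩ T ⁻¹' {1}).indicator (fun _ => (1 : ℝ)) | m']) x ∂μ := by
        refine integral_congr_ae ?_
        filter_upwards [key] with ω hω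
        simp only [Pi.mul_apply]
        have hTc : μ[T|m'] = μ[(T ⁻¹' {1}).indicator (fun _ => (1 : ℝ))|m'] := by
          rw [← hTind]
        rw [hTc, mul_comm]
        exact hω.symm
    _ = (μ (X ⁻¹' A ∩ T ⁻¹' {1})).toReal := by
        rw [integral_condExp hm', integral_indicator (hsmeas.inter ht)]
        simp [Measure.real]
    _ = ∫ x in X ⁻¹' A, T x ∂μ := hRHS.symm

/-- Any balancing score is finer than the propensity score: if `b` is a measurable
function of `X` with `X ⫫ T | b(X)`, then `E[T | σ(X)] = E[T | σ(b(X))]` almost surely. -/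
theorem balancing_score_finer_than_propensity
    {Ω : Type*} [MeasurableSpace Ω] [StandardBorelSpace Ω]
    {μ : Measure Ω} [IsProbabilityMeasure μ]
    {p k : ℕ} (X : Ω → (Fin p → ℝ)) (T : Ω → ℝ) (b : (Fin p → ℝ) → (Fin k → ℝ))
    (hX : Measurable X) (hT : Measurable T) (hb : Measurable b)
    (hTbin : ∀ ω, T ω = 0 ∨ T ω = 1)
    -- balancing score: X ⫫ T | b(X)
    (hBal : CondIndepFun (MeasurableSpace.comap (fun ω => b (X ω)) inferInstance)
      (hb.comp hX).comap_le X T μ) :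
    μ[T | MeasurableSpace.comap X inferInstance]
      =ᵐ[μ] μ[T | MeasurableSpace.comap (fun ω => b (X ω)) inferInstance] := by
  refine balancing_aux (hb.comp hX).comap_le hX ?_ hT hTbin hBal
  rw [← MeasurableSpace.comap_comp]
  exact MeasurableSpace.comap_mono hb.comap_le
end

section
/- Under unconfoundedness (Y(0),Y(1)) ⫫ T | X and overlap 0 < P(T=1|X) < 1 a.s., the average treatment effect is identified: E[Y(1) − Y(0)] = E[ E[Y | T=1, X] − E[Y | T=0, X] ], where Y = T·Y(1) + (1−T)·Y(0) is the observed outcome. -/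
open MeasureTheory ProbabilityTheory MeasurableSpace

lemma comap_real_eq_generateFrom_aux {Ω : Type*} (f : Ω → ℝ) :
    MeasurableSpace.comap f (inferInstance : MeasurableSpace ℝ)
      = MeasurableSpace.generateFrom
          ((fun s => f ⁻¹' s) '' (⋃ a : ℚ, {Set.Iic (a : ℝ)})) := by
  conv_lhs => rw [show (inferInstance : MeasurableSpace ℝ) = borel ℝ from rfl,
    Real.borel_eq_generateFrom_Iic_rat]
  rw [MeasurableSpace.comap_generateFrom]

lemma isPiSystem_preimage_Iic_aux {Ω : Type*} (f : Ω → ℝ) :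
    IsPiSystem ((fun s => f ⁻¹' s) '' (⋃ a : ℚ, {Set.Iic (a : ℝ)})) := by
  rintro _ ⟨s, hs, rfl⟩ _ ⟨t, ht, rfl⟩ -
  simp only [Set.mem_iUnion, Set.mem_singleton_iff] at hs ht
  obtain ⟨q, rfl⟩ := hs
  obtain ⟨r, rfl⟩ := ht
  refine ⟨Set.Iic ((min q r : ℚ) : ℝ), ?_, ?_⟩
  · simp only [Set.mem_iUnion, Set.mem_singleton_iff]
    exact ⟨min q r, rfl⟩
  · rw [← Set.preimage_inter, Set.Iic_inter_Iic]
    push_cast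
    rfl

/-- Under conditional independence, the conditional expectation of a product factorizes. -/
lemma condexp_mul_of_condIndepFun_aux {Ω : Type*} {m : MeasurableSpace Ω}
    [mΩ : MeasurableSpace Ω] [StandardBorelSpace Ω]
    {μ : Measure Ω} [IsProbabilityMeasure μ] {hm : m ≤ mΩ}
    {f g : Ω → ℝ} (hf : Measurable f) (hg : Measurable g)
    (hindep : CondIndepFun m hm f g μ)
    (hfi : Integrable f μ) (hgi : Integrable g μ) (hfgi : Integrable (f * g) μ) :
    μ[f * g | m] =ᵐ[μ] μ[f | m] * μ[g | m] := by
  have hqr : ∀ q r : ℚ, ∀ᵐ ω ∂(μ.trim hm),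
      condExpKernel μ m ω (f ⁻¹' Set.Iic (q : ℝ) ∩ g ⁻¹' Set.Iic (r : ℝ))
        = condExpKernel μ m ω (f ⁻¹' Set.Iic (q : ℝ))
          * condExpKernel μ m ω (g ⁻¹' Set.Iic (r : ℝ)) := fun q r =>
    hindep _ _ ⟨Set.Iic (q : ℝ), measurableSet_Iic, rfl⟩
      ⟨Set.Iic (r : ℝ), measurableSet_Iic, rfl⟩
  have hae : ∀ᵐ ω ∂μ, ∀ q r : ℚ,
      condExpKernel μ m ω (f ⁻¹' Set.Iic (q : ℝ) ∩ g ⁻¹' Set.Iic (r : ℝ))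
        = condExpKernel μ m ω (f ⁻¹' Set.Iic (q : ℝ))
          * condExpKernel μ m ω (g ⁻¹' Set.Iic (r : ℝ)) := by
    refine ae_of_ae_trim hm ?_
    rw [ae_all_iff]
    intro q
    rw [ae_all_iff]
    exact hqr q
  have hind : ∀ᵐ ω ∂μ, IndepFun f g (condExpKernel μ m ω) := by
    filter_upwards [hae] with ω hω
    have h : Indep (MeasurableSpace.comap f inferInstance)
        (MeasurableSpace.comap g inferInstance) (condExpKernel μ m ω) := by
      refine IndepSets.indep hf.comap_le hg.comap_le (isPiSystem_preimage_Iic_aux f)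
        (isPiSystem_preimage_Iic_aux g) (comap_real_eq_generateFrom_aux f)
        (comap_real_eq_generateFrom_aux g) ?_
      rintro _ _ ⟨s, hs, rfl⟩ ⟨t, ht, rfl⟩
      simp only [Set.mem_iUnion, Set.mem_singleton_iff] at hs ht
      obtain ⟨q, rfl⟩ := hs
      obtain ⟨r, rfl⟩ := ht
      exact ae_of_all _ fun _ => hω q r
    exact h
  filter_upwards [hind, condExp_ae_eq_integral_condExpKernel hm hfgi,
    condExp_ae_eq_integral_condExpKernel hm hfi,
    condExp_ae_eq_integral_condExpKernel hm hgi,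
    (hfi.condExpKernel_ae : ∀ᵐ ω ∂μ, Integrable f (condExpKernel μ m ω)),
    (hgi.condExpKernel_ae : ∀ᵐ ω ∂μ, Integrable g (condExpKernel μ m ω))]
    with ω h1 h2 h3 h4 h5 h6
  rw [h2, Pi.mul_apply, h3, h4]
  exact IndepFun.integral_mul_eq_mul_integral h1 h5.aestronglyMeasurable h6.aestronglyMeasurable

/-- Under unconfoundedness `(Y(0),Y(1)) ⫫ T | X` and overlap
`0 < P(T=1|X) < 1` a.s., the ATE is identified:
`E[Y(1) − Y(0)] = E[ E[Y | T=1, X] − E[Y | T=0, X] ]`, where the conditional means on the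
treatment arms are given by `E[Y | T=1, X] = E[T·Y | X] / E[T | X]` and
`E[Y | T=0, X] = E[(1−T)·Y | X] / (1 − E[T | X])`. -/
theorem ate_identification_adjustment
    {Ω : Type*} [MeasurableSpace Ω] [StandardBorelSpace Ω]
    {μ : Measure Ω} [IsProbabilityMeasure μ]
    {p : ℕ} (X : Ω → (Fin p → ℝ)) (T : Ω → ℝ) (Y0 Y1 : Ω → ℝ)
    (hX : Measurable X) (hT : Measurable T)
    (hY0 : Measurable Y0) (hY1 : Measurable Y1)
    (hY0int : Integrable Y0 μ) (hY1int : Integrable Y1 μ)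
    (hTbin : ∀ ω, T ω = 0 ∨ T ω = 1)
    -- unconfoundedness: (Y(0), Y(1)) ⫫ T | X
    (hUnconf : CondIndepFun (MeasurableSpace.comap X inferInstance) hX.comap_le
      (fun ω => (Y0 ω, Y1 ω)) T μ)
    -- overlap: 0 < P(T=1|X) < 1 a.s.
    (hOverlap : ∀ᵐ ω ∂μ, 0 < (μ[T | MeasurableSpace.comap X inferInstance]) ω ∧
      (μ[T | MeasurableSpace.comap X inferInstance]) ω < 1) :
    -- Y := T·Y(1) + (1−T)·Y(0) is the observed outcome
    (∫ ω, (Y1 ω - Y0 ω) ∂μ) =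
      ∫ ω, ((μ[fun ω' => T ω' * (T ω' * Y1 ω' + (1 - T ω') * Y0 ω') |
              MeasurableSpace.comap X inferInstance]) ω
            / (μ[T | MeasurableSpace.comap X inferInstance]) ω
          - (μ[fun ω' => (1 - T ω') * (T ω' * Y1 ω' + (1 - T ω') * Y0 ω') |
              MeasurableSpace.comap X inferInstance]) ω
            / (1 - (μ[T | MeasurableSpace.comap X inferInstance]) ω)) ∂μ := by
  have hm := hX.comap_le
  set S : Ω → ℝ := fun ω => 1 - T ω with hS_def
  -- basic integrability facts
  have hTint : Integrable T μ := by
    refine Integrable.mono' (integrable_const 1) hT.aestronglyMeasurable ?_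
    filter_upwards with ω
    rcases hTbin ω with h | h <;> simp [h]
  have hSint : Integrable S μ := (integrable_const (1 : ℝ)).sub hTint
  have hSmeas : Measurable S := measurable_const.sub hT
  have hTY1int : Integrable (T * Y1) μ := by
    refine Integrable.mono' hY1int.norm ((hT.mul hY1).aestronglyMeasurable) ?_
    filter_upwards with ω
    rcases hTbin ω with h | h <;> simp [Pi.mul_apply, h, abs_nonneg]
  have hSY0int : Integrable (S * Y0) μ := by
    refine Integrable.mono' hY0int.norm ((hSmeas.mul hY0).aestronglyMeasurable) ?_
    filter_upwards with ω
    rcases hTbin ω with h | h <;> simp [Pi.mul_apply, hS_def, h, abs_nonneg]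
  -- conditional independence of the coordinates
  have hY1T : CondIndepFun (MeasurableSpace.comap X inferInstance) hX.comap_le Y1 T μ := by
    have h := Kernel.IndepFun.comp hUnconf
      (measurable_snd : Measurable (Prod.snd : ℝ × ℝ → ℝ))
      (measurable_id : Measurable (id : ℝ → ℝ))
    exact h
  have hTY1 : CondIndepFun (MeasurableSpace.comap X inferInstance) hX.comap_le T Y1 μ :=
    Kernel.IndepFun.symm hY1T
  have hY0S : CondIndepFun (MeasurableSpace.comap X inferInstance) hX.comap_le Y0 S μ := by
    have h := Kernel.IndepFun.comp hUnconf
      (measurable_fst : Measurable (Prod.fst : ℝ × ℝ → ℝ))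
      ((measurable_const.sub measurable_id) : Measurable (fun t : ℝ => 1 - t))
    exact h
  have hSY0 : CondIndepFun (MeasurableSpace.comap X inferInstance) hX.comap_le S Y0 μ :=
    Kernel.IndepFun.symm hY0S
  -- factorization of conditional expectations
  have key1 : μ[T * Y1 | MeasurableSpace.comap X inferInstance]
      =ᵐ[μ] μ[T | MeasurableSpace.comap X inferInstance]
        * μ[Y1 | MeasurableSpace.comap X inferInstance] :=
    condexp_mul_of_condIndepFun_aux hT hY1 hTY1 hTint hY1int hTY1int
  have key0 : μ[S * Y0 | MeasurableSpace.comap X inferInstance]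
      =ᵐ[μ] μ[S | MeasurableSpace.comap X inferInstance]
        * μ[Y0 | MeasurableSpace.comap X inferInstance] :=
    condexp_mul_of_condIndepFun_aux hSmeas hY0 hSY0 hSint hY0int hSY0int
  have hSm : μ[S | MeasurableSpace.comap X inferInstance]
      =ᵐ[μ] fun ω => 1 - (μ[T | MeasurableSpace.comap X inferInstance]) ω := by
    have h : μ[S | MeasurableSpace.comap X inferInstance]
        =ᵐ[μ] μ[(fun _ : Ω => (1 : ℝ)) | MeasurableSpace.comap X inferInstance]
          - μ[T | MeasurableSpace.comap X inferInstance] :=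
      condExp_sub (integrable_const (1 : ℝ)) hTint _
    have hc : μ[(fun _ : Ω => (1 : ℝ)) | MeasurableSpace.comap X inferInstance]
        = fun _ => (1 : ℝ) := condExp_const hm (1 : ℝ)
    filter_upwards [h] with ω hω
    rw [hω, Pi.sub_apply, hc]
  -- identify the lambdas inside the conditional expectations
  have eqA : (fun ω' => T ω' * (T ω' * Y1 ω' + (1 - T ω') * Y0 ω')) = T * Y1 := by
    funext ω'
    rcases hTbin ω' with h | h <;> simp [Pi.mul_apply, h]
  have eqB : (fun ω' => (1 - T ω') * (T ω' * Y1 ω' + (1 - T ω') * Y0 ω')) = S * Y0 := by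
    funext ω'
    rcases hTbin ω' with h | h <;> simp [Pi.mul_apply, hS_def, h]
  have hRHS : (fun ω =>
        (μ[fun ω' => T ω' * (T ω' * Y1 ω' + (1 - T ω') * Y0 ω') |
            MeasurableSpace.comap X inferInstance]) ω
          / (μ[T | MeasurableSpace.comap X inferInstance]) ω
        - (μ[fun ω' => (1 - T ω') * (T ω' * Y1 ω' + (1 - T ω') * Y0 ω') |
            MeasurableSpace.comap X inferInstance]) ω
          / (1 - (μ[T | MeasurableSpace.comap X inferInstance]) ω))
      =ᵐ[μ] fun ω => (μ[Y1 | MeasurableSpace.comap X inferInstance]) ω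
        - (μ[Y0 | MeasurableSpace.comap X inferInstance]) ω := by
    rw [eqA, eqB]
    filter_upwards [key1, key0, hSm, hOverlap] with ω h1 h0 hs ho
    obtain ⟨ho1, ho2⟩ := ho
    have hne1 : (μ[T | MeasurableSpace.comap X inferInstance]) ω ≠ 0 := ne_of_gt ho1
    have hne2 : 1 - (μ[T | MeasurableSpace.comap X inferInstance]) ω ≠ 0 :=
      sub_ne_zero.2 (ne_of_gt ho2)
    rw [h1, h0, Pi.mul_apply, Pi.mul_apply, hs]
    field_simp
  rw [integral_congr_ae hRHS, integral_sub integrable_condExp integrable_condExp,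
    integral_condExp hm, integral_condExp hm, integral_sub hY1int hY0int]
end

section
/- If (Y(0),Y(1)) ⫫ T | b(X) for a balancing score b with 0 < P(T=1|b(X)) < 1 a.s., then E[Y(1) − Y(0)] = E[ E[Y | T=1, b(X)] − E[Y | T=0, b(X)] ], where Y is the observed outcome. -/
open MeasureTheory ProbabilityTheory MeasurableSpace

open Set in
lemma aux_condexp_indicator_mul
    {Ω : Type*} {m : MeasurableSpace Ω} [mΩ : MeasurableSpace Ω] [StandardBorelSpace Ω]
    {μ : Measure Ω} [IsProbabilityMeasure μ] (hm : m ≤ mΩ)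
    {W : Ω → ℝ} (hW : Measurable W) (hWint : Integrable W μ)
    {A : Set Ω} (hA : MeasurableSet A)
    (hindep : ∀ s : Set ℝ, MeasurableSet s →
      ∀ᵐ ω ∂μ, condExpKernel μ m ω (W ⁻¹' s ∩ A)
        = condExpKernel μ m ω (W ⁻¹' s) * condExpKernel μ m ω A) :
    μ[A.indicator W | m] =ᵐ[μ] fun ω =>
      (condExpKernel μ m ω A).toReal * (μ[W|m]) ω := by
  have hq : ∀ᵐ ω ∂μ, ∀ q : ℚ, condExpKernel μ m ω (W ⁻¹' Iic (q:ℝ) ∩ A)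
      = condExpKernel μ m ω (W ⁻¹' Iic (q:ℝ)) * condExpKernel μ m ω A := by
    rw [ae_all_iff]
    exact fun q => hindep _ measurableSet_Iic
  filter_upwards [hq, hWint.condExpKernel_ae (m := m),
    condExp_ae_eq_integral_condExpKernel hm hWint,
    condExp_ae_eq_integral_condExpKernel hm (hWint.indicator hA)] with ω hqω hWκ hWce hIce
  set κ : Measure Ω := condExpKernel μ m ω with hκ
  have hmap : Measure.map W (κ.restrict A) = κ A • Measure.map W κ := by
    have h1 : IsFiniteMeasure (Measure.map W (κ.restrict A)) := by
      constructor
      rw [Measure.map_apply hW MeasurableSet.univ]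
      exact (measure_lt_top _ _)
    refine ext_of_generate_finite _ ?_ Real.isPiSystem_Iic_rat ?_ ?_
    · rw [BorelSpace.measurable_eq (α := ℝ)]
      exact Real.borel_eq_generateFrom_Iic_rat
    · rintro s hs
      simp only [mem_iUnion, mem_singleton_iff] at hs
      obtain ⟨q, rfl⟩ := hs
      rw [Measure.map_apply hW measurableSet_Iic,
        Measure.restrict_apply (hW measurableSet_Iic), Measure.smul_apply,
        Measure.map_apply hW measurableSet_Iic, smul_eq_mul, mul_comm]
      exact hqω q
    · rw [Measure.map_apply hW MeasurableSet.univ, preimage_univ,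
        Measure.restrict_apply MeasurableSet.univ, univ_inter, Measure.smul_apply,
        Measure.map_apply hW MeasurableSet.univ, preimage_univ, measure_univ,
        smul_eq_mul, mul_one]
  calc (μ[A.indicator W | m]) ω = ∫ y, A.indicator W y ∂κ := hIce
    _ = ∫ y in A, W y ∂κ := integral_indicator hA
    _ = ∫ y, id y ∂(Measure.map W (κ.restrict A)) :=
        (integral_map hW.aemeasurable aestronglyMeasurable_id).symm
    _ = ∫ y, id y ∂(κ A • Measure.map W κ) := by rw [hmap]
    _ = (κ A).toReal * ∫ y, id y ∂(Measure.map W κ) := by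
        rw [integral_smul_measure]; rfl
    _ = (κ A).toReal * ∫ y, W y ∂κ := by
        rw [integral_map hW.aemeasurable aestronglyMeasurable_id]; rfl
    _ = (κ A).toReal * (μ[W|m]) ω := by rw [hWce]


/-- For a balancing score `b` with `(Y(0),Y(1)) ⫫ T | b(X)` and overlap
`0 < P(T=1|b(X)) < 1` a.s., the ATE is identified via `b(X)`:
`E[Y(1) − Y(0)] = E[ E[Y | T=1, b(X)] − E[Y | T=0, b(X)] ]`, where the conditional means on the
treatment arms are given by `E[Y | T=1, b(X)] = E[T·Y | b(X)] / E[T | b(X)]` and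
`E[Y | T=0, b(X)] = E[(1−T)·Y | b(X)] / (1 − E[T | b(X)])`. -/
theorem ate_identification_balancing_score
    {Ω : Type*} [MeasurableSpace Ω] [StandardBorelSpace Ω]
    {μ : Measure Ω} [IsProbabilityMeasure μ]
    {p k : ℕ} (X : Ω → (Fin p → ℝ)) (T : Ω → ℝ) (Y0 Y1 : Ω → ℝ)
    (b : (Fin p → ℝ) → (Fin k → ℝ))
    (hX : Measurable X) (hT : Measurable T) (hb : Measurable b)
    (hY0 : Measurable Y0) (hY1 : Measurable Y1)
    (hY0int : Integrable Y0 μ) (hY1int : Integrable Y1 μ)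
    (hTbin : ∀ ω, T ω = 0 ∨ T ω = 1)
    -- unconfoundedness: (Y(0), Y(1)) ⫫ T | X
    (hUnconf : CondIndepFun (MeasurableSpace.comap (fun ω => b (X ω)) inferInstance) (hb.comp hX).comap_le
      (fun ω => (Y0 ω, Y1 ω)) T μ)
    -- overlap: 0 < P(T=1|X) < 1 a.s.
    (hOverlap : ∀ᵐ ω ∂μ, 0 < (μ[T | MeasurableSpace.comap (fun ω => b (X ω)) inferInstance]) ω ∧
      (μ[T | MeasurableSpace.comap (fun ω => b (X ω)) inferInstance]) ω < 1) :
    -- Y := T·Y(1) + (1−T)·Y(0) is the observed outcome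
    (∫ ω, (Y1 ω - Y0 ω) ∂μ) =
      ∫ ω, ((μ[fun ω' => T ω' * (T ω' * Y1 ω' + (1 - T ω') * Y0 ω') |
              MeasurableSpace.comap (fun ω => b (X ω)) inferInstance]) ω
            / (μ[T | MeasurableSpace.comap (fun ω => b (X ω)) inferInstance]) ω
          - (μ[fun ω' => (1 - T ω') * (T ω' * Y1 ω' + (1 - T ω') * Y0 ω') |
              MeasurableSpace.comap (fun ω => b (X ω)) inferInstance]) ω
            / (1 - (μ[T | MeasurableSpace.comap (fun ω => b (X ω)) inferInstance]) ω)) ∂μ := by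
  have hm : (MeasurableSpace.comap (fun ω => b (X ω)) inferInstance) ≤ _ := (hb.comp hX).comap_le
  have hA : MeasurableSet (T ⁻¹' {1} : Set Ω) := hT (measurableSet_singleton 1)
  have hf1 : (fun ω' => T ω' * (T ω' * Y1 ω' + (1 - T ω') * Y0 ω'))
      = (T ⁻¹' {1}).indicator Y1 := by
    funext ω
    rcases hTbin ω with h | h <;>
      simp [Set.indicator_apply, Set.mem_preimage, h]
  have hf0 : (fun ω' => (1 - T ω') * (T ω' * Y1 ω' + (1 - T ω') * Y0 ω'))
      = (T ⁻¹' {1})ᶜ.indicator Y0 := by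
    funext ω
    rcases hTbin ω with h | h <;>
      simp [Set.indicator_apply, Set.mem_preimage, h]
  have hTeq : T = (T ⁻¹' {1} : Set Ω).indicator (fun _ => (1:ℝ)) := by
    funext ω
    rcases hTbin ω with h | h <;>
      simp [Set.indicator_apply, Set.mem_preimage, h]
  have hK := Kernel.indepFun_iff_measure_inter_preimage_eq_mul.mp hUnconf
  have hind1 : ∀ s : Set ℝ, MeasurableSet s →
      ∀ᵐ ω ∂μ, condExpKernel μ (MeasurableSpace.comap (fun ω => b (X ω)) inferInstance) ω (Y1 ⁻¹' s ∩ T ⁻¹' {1})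
        = condExpKernel μ (MeasurableSpace.comap (fun ω => b (X ω)) inferInstance) ω (Y1 ⁻¹' s) * condExpKernel μ (MeasurableSpace.comap (fun ω => b (X ω)) inferInstance) ω (T ⁻¹' {1}) := by
    intro s hs
    have h := hK (Set.univ ×ˢ s) {1} (MeasurableSet.univ.prod hs) (measurableSet_singleton 1)
    have hpre : (fun ω => (Y0 ω, Y1 ω)) ⁻¹' (Set.univ ×ˢ s) = Y1 ⁻¹' s := by
      ext ω; simp
    rw [hpre] at h
    exact ae_of_ae_trim hm h
  have hind0 : ∀ s : Set ℝ, MeasurableSet s →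
      ∀ᵐ ω ∂μ, condExpKernel μ (MeasurableSpace.comap (fun ω => b (X ω)) inferInstance) ω (Y0 ⁻¹' s ∩ (T ⁻¹' {1})ᶜ)
        = condExpKernel μ (MeasurableSpace.comap (fun ω => b (X ω)) inferInstance) ω (Y0 ⁻¹' s) * condExpKernel μ (MeasurableSpace.comap (fun ω => b (X ω)) inferInstance) ω (T ⁻¹' {1})ᶜ := by
    intro s hs
    have h := hK (s ×ˢ Set.univ) ({1}ᶜ) (hs.prod MeasurableSet.univ)
      (measurableSet_singleton 1).compl
    have hpre : (fun ω => (Y0 ω, Y1 ω)) ⁻¹' (s ×ˢ Set.univ) = Y0 ⁻¹' s := by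
      ext ω; simp
    have hpre' : T ⁻¹' ({1}ᶜ : Set ℝ) = (T ⁻¹' {1})ᶜ := rfl
    rw [hpre, hpre'] at h
    exact ae_of_ae_trim hm h
  have h1 := aux_condexp_indicator_mul hm hY1 hY1int hA hind1
  have h0 := aux_condexp_indicator_mul hm hY0 hY0int hA.compl hind0
  have hκA : (fun ω => (condExpKernel μ (MeasurableSpace.comap (fun ω => b (X ω)) inferInstance) ω (T ⁻¹' {1})).toReal) =ᵐ[μ] μ[T|(MeasurableSpace.comap (fun ω => b (X ω)) inferInstance)] := by
    have h := condExpKernel_ae_eq_condExp (μ := μ) hm hA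
    rwa [← hTeq] at h
  have hκAc : (fun ω => (condExpKernel μ (MeasurableSpace.comap (fun ω => b (X ω)) inferInstance) ω (T ⁻¹' {1})ᶜ).toReal)
      =ᵐ[μ] fun ω => 1 - (μ[T|(MeasurableSpace.comap (fun ω => b (X ω)) inferInstance)]) ω := by
    filter_upwards [hκA] with ω hω
    have h : condExpKernel μ (MeasurableSpace.comap (fun ω => b (X ω)) inferInstance) ω (T ⁻¹' {1})ᶜ
        = 1 - condExpKernel μ (MeasurableSpace.comap (fun ω => b (X ω)) inferInstance) ω (T ⁻¹' {1}) := prob_compl_eq_one_sub hA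
    rw [h, ENNReal.toReal_sub_of_le prob_le_one ENNReal.one_ne_top, ENNReal.toReal_one, hω]
  rw [hf1, hf0]
  have hfinal : (fun ω => (μ[(T ⁻¹' {1}).indicator Y1|(MeasurableSpace.comap (fun ω => b (X ω)) inferInstance)]) ω / (μ[T|(MeasurableSpace.comap (fun ω => b (X ω)) inferInstance)]) ω
        - (μ[(T ⁻¹' {1})ᶜ.indicator Y0|(MeasurableSpace.comap (fun ω => b (X ω)) inferInstance)]) ω / (1 - (μ[T|(MeasurableSpace.comap (fun ω => b (X ω)) inferInstance)]) ω))
      =ᵐ[μ] fun ω => (μ[Y1|(MeasurableSpace.comap (fun ω => b (X ω)) inferInstance)]) ω - (μ[Y0|(MeasurableSpace.comap (fun ω => b (X ω)) inferInstance)]) ω := by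
    filter_upwards [h1, h0, hκA, hκAc, hOverlap] with ω e1 e0 eA eAc ho
    obtain ⟨ho1, ho2⟩ := ho
    have hne1 : (μ[T|(MeasurableSpace.comap (fun ω => b (X ω)) inferInstance)]) ω ≠ 0 := ne_of_gt ho1
    have hne0 : 1 - (μ[T|(MeasurableSpace.comap (fun ω => b (X ω)) inferInstance)]) ω ≠ 0 := sub_ne_zero.mpr (ne_of_gt ho2)
    rw [e1, e0, eA, eAc]
    field_simp
  calc ∫ ω, (Y1 ω - Y0 ω) ∂μ
      = ∫ ω, Y1 ω ∂μ - ∫ ω, Y0 ω ∂μ := integral_sub hY1int hY0int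
    _ = ∫ ω, (μ[Y1|(MeasurableSpace.comap (fun ω => b (X ω)) inferInstance)]) ω ∂μ - ∫ ω, (μ[Y0|(MeasurableSpace.comap (fun ω => b (X ω)) inferInstance)]) ω ∂μ := by
        rw [integral_condExp hm, integral_condExp hm]
    _ = ∫ ω, ((μ[Y1|(MeasurableSpace.comap (fun ω => b (X ω)) inferInstance)]) ω - (μ[Y0|(MeasurableSpace.comap (fun ω => b (X ω)) inferInstance)]) ω) ∂μ :=
        (integral_sub integrable_condExp integrable_condExp).symm
    _ = _ := (integral_congr_ae hfinal.symm)
end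

section
/- Under unconfoundedness and overlap, the ATE admits the inverse-probability-weighting representation: E[Y(1) − Y(0)] = E[ T·Y / e(X) − (1−T)·Y / (1 − e(X)) ], where e(X) = P(T=1|X) and Y is the observed outcome. -/
open MeasureTheory ProbabilityTheory MeasurableSpace

lemma ipw_key
    {Ω : Type*} {m' : MeasurableSpace Ω} [mΩ : MeasurableSpace Ω] [StandardBorelSpace Ω]
    {μ : Measure Ω} [IsProbabilityMeasure μ] (hm' : m' ≤ mΩ)
    {f S : Ω → ℝ} {η : ℝ} (hf : Measurable f) (hS : Measurable S)
    (hfi : Integrable f μ)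
    (hSbin : ∀ ω, S ω = 0 ∨ S ω = 1) (hη : 0 < η)
    (hIndep : CondIndepFun m' hm' f S μ)
    (hlow : ∀ᵐ ω ∂μ, η ≤ (μ[S|m']) ω) :
    ∫ ω, S ω * f ω / (μ[S|m']) ω ∂μ = ∫ ω, f ω ∂μ := by
  haveI : SigmaFinite (μ.trim hm') := by infer_instance
  set e : Ω → ℝ := μ[S|m'] with he
  set ν : Measure ℝ := μ.map f with hν
  haveI : IsProbabilityMeasure ν := Measure.isProbabilityMeasure_map hf.aemeasurable
  have he_sm : StronglyMeasurable[m'] e := stronglyMeasurable_condExp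
  have he_meas : Measurable e := (he_sm.mono hm').measurable
  have hSabs : ∀ ω, |S ω| ≤ 1 := by
    intro ω; rcases hSbin ω with h | h <;> simp [h]
  have hinv_bound : ∀ᵐ ω ∂μ, ‖(e ω)⁻¹‖ ≤ η⁻¹ := by
    filter_upwards [hlow] with ω hω
    have heω : 0 < e ω := hη.trans_le hω
    rw [Real.norm_eq_abs, abs_of_pos (inv_pos.2 heω)]
    exact inv_anti₀ hη hω
  -- integrability helper
  have key_int : ∀ (φ : ℝ → ℝ), Integrable φ ν →
      Integrable (fun ω => φ (f ω)) μ ∧ Integrable (fun ω => S ω * φ (f ω) / e ω) μ := by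
    intro φ hφ
    have h1 : Integrable (fun ω => φ (f ω)) μ := by
      rw [hν, integrable_map_measure hφ.aestronglyMeasurable hf.aemeasurable] at hφ
      exact hφ
    refine ⟨h1, ?_⟩
    refine Integrable.mono' (h1.norm.const_mul η⁻¹) ?_ ?_
    · simp only [div_eq_mul_inv]
      exact (hS.aestronglyMeasurable.mul h1.aestronglyMeasurable).mul
        he_meas.inv.aestronglyMeasurable
    · filter_upwards [hlow] with ω hω
      have heω : 0 < e ω := hη.trans_le hω
      rw [Real.norm_eq_abs, Real.norm_eq_abs, abs_div, abs_mul, abs_of_pos heω]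
      calc |S ω| * |φ (f ω)| / e ω ≤ 1 * |φ (f ω)| / η :=
            div_le_div₀ (by positivity)
              (mul_le_mul_of_nonneg_right (hSabs ω) (abs_nonneg _)) hη hω
        _ = η⁻¹ * |φ (f ω)| := by ring
  -- the induction
  have main : ∀ ⦃φ : ℝ → ℝ⦄, Integrable φ ν →
      ∫ ω, S ω * φ (f ω) / e ω ∂μ = ∫ ω, φ (f ω) ∂μ := by
    refine Integrable.induction
      (P := fun φ => ∫ ω, S ω * φ (f ω) / e ω ∂μ = ∫ ω, φ (f ω) ∂μ) ?_ ?_ ?_ ?_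
    · -- indicator case
      intro c s hs hsν
      set B : Set Ω := f ⁻¹' s with hB_def
      set A : Set Ω := S ⁻¹' {1} with hA_def
      have hB : MeasurableSet B := hf hs
      have hA : MeasurableSet A := hS (measurableSet_singleton 1)
      have hSA1 : ∀ ω, ω ∈ A → S ω = 1 := fun ω h => h
      have hSA0 : ∀ ω, ω ∉ A → S ω = 0 := fun ω h => (hSbin ω).resolve_right h
      have hSind : S = A.indicator (fun _ => (1:ℝ)) := by
        funext ω
        by_cases hω : ω ∈ A
        · rw [Set.indicator_of_mem hω]; exact hSA1 ω hω
        · rw [Set.indicator_of_notMem hω]; exact hSA0 ω hω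
      set q : Ω → ℝ := μ[B.indicator (fun _ => (1:ℝ))|m'] with hq
      -- conditional independence
      have hCI : μ[(B ∩ A).indicator (fun _ => (1:ℝ))|m']
          =ᵐ[μ] fun ω => q ω * e ω := by
        have := (condIndepFun_iff_condExp_inter_preimage_eq_mul hf hS).mp hIndep
          s {1} hs (measurableSet_singleton 1)
        have heA : μ[A.indicator (fun _ => (1:ℝ))|m'] = e := by
          rw [he, hSind]
        refine this.trans ?_
        rw [heA, hq]
      -- pointwise rewrite of LHS integrand
      have hpoint : ∀ ω, S ω * Set.indicator s (fun _ => c) (f ω) / e ω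
          = (fun x => (e x)⁻¹) ω * ((B ∩ A).indicator (fun _ => c)) ω := by
        intro ω
        rcases hSbin ω with h0 | h1
        · have hωA : ω ∉ A := by
            simp only [hA_def, Set.mem_preimage, Set.mem_singleton_iff, h0]
            norm_num
          rw [h0, Set.indicator_of_notMem (s := B ∩ A) (fun hmem => hωA hmem.2)]
          simp
        · have hωA : ω ∈ A := by
            simp only [hA_def, Set.mem_preimage, Set.mem_singleton_iff, h1]
          by_cases hωB : f ω ∈ s
          · have hmemBA : ω ∈ B ∩ A := ⟨hωB, hωA⟩
            rw [h1, Set.indicator_of_mem hωB, Set.indicator_of_mem hmemBA]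
            rw [div_eq_mul_inv]; ring
          · rw [Set.indicator_of_notMem hωB,
              Set.indicator_of_notMem (s := B ∩ A) (fun hmem => hωB hmem.1)]
            simp
      have hk : Integrable ((B ∩ A).indicator (fun _ => c)) μ :=
        (integrable_const c).indicator (hB.inter hA)
      have hmul : μ[(fun x => (e x)⁻¹) * (B ∩ A).indicator (fun _ => c)|m']
          =ᵐ[μ] (fun x => (e x)⁻¹) * μ[(B ∩ A).indicator (fun _ => c)|m'] :=
        condExp_stronglyMeasurable_mul_of_bound hm'
          (he_sm.measurable.inv.stronglyMeasurable) hk η⁻¹ hinv_bound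
      have hksmul : (B ∩ A).indicator (fun _ => c)
          = c • (B ∩ A).indicator (fun _ => (1:ℝ)) := by
        funext ω
        by_cases hω : ω ∈ B ∩ A <;>
          simp [Set.indicator_of_mem, Set.indicator_of_notMem, hω]
      have hkc : μ[(B ∩ A).indicator (fun _ => c)|m']
          =ᵐ[μ] fun ω => c * (q ω * e ω) := by
        rw [hksmul]
        refine (condExp_smul c _ _).trans ?_
        filter_upwards [hCI] with ω hω
        simp only [Pi.smul_apply, smul_eq_mul, hω]
      calc ∫ ω, S ω * Set.indicator s (fun _ => c) (f ω) / e ω ∂μ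
          = ∫ ω, ((fun x => (e x)⁻¹) * (B ∩ A).indicator (fun _ => c)) ω ∂μ := by
            exact integral_congr_ae (Filter.Eventually.of_forall fun ω => hpoint ω)
        _ = ∫ ω, (μ[(fun x => (e x)⁻¹) * (B ∩ A).indicator (fun _ => c)|m']) ω ∂μ :=
            (integral_condExp hm').symm
        _ = ∫ ω, (e ω)⁻¹ * (c * (q ω * e ω)) ∂μ := by
            refine integral_congr_ae (hmul.trans ?_)
            filter_upwards [hkc] with ω hω
            simp only [Pi.mul_apply, hω]
        _ = ∫ ω, c * q ω ∂μ := by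
            refine integral_congr_ae ?_
            filter_upwards [hlow] with ω hω
            have heω : e ω ≠ 0 := (hη.trans_le hω).ne'
            field_simp
        _ = c * ∫ ω, q ω ∂μ := integral_const_mul c _
        _ = c * ∫ ω, B.indicator (fun _ => (1:ℝ)) ω ∂μ := by
            rw [hq, integral_condExp hm']
        _ = ∫ ω, Set.indicator s (fun _ => c) (f ω) ∂μ := by
            rw [← integral_const_mul]
            refine integral_congr_ae (Filter.Eventually.of_forall fun ω => ?_)
            by_cases hω : f ω ∈ s <;>
              simp [hB_def, Set.indicator_apply, Set.mem_preimage, hω]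
    · -- additivity
      intro φ ψ hsupp hφ hψ hPφ hPψ
      have h1 := key_int φ hφ
      have h2 := key_int ψ hψ
      have e1 : ∫ ω, S ω * (φ + ψ) (f ω) / e ω ∂μ
          = ∫ ω, (S ω * φ (f ω) / e ω + S ω * ψ (f ω) / e ω) ∂μ :=
        integral_congr_ae (Filter.Eventually.of_forall fun ω => by
          simp only [Pi.add_apply]; ring)
      have e2 : ∫ ω, (φ + ψ) (f ω) ∂μ = ∫ ω, (φ (f ω) + ψ (f ω)) ∂μ :=
        integral_congr_ae (Filter.Eventually.of_forall fun ω => by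
          simp only [Pi.add_apply])
      rw [e1, e2, integral_add h1.2 h2.2, integral_add h1.1 h2.1, hPφ, hPψ]
    · -- closedness
      set G : (ℝ →₁[ν] ℝ) → ℝ := fun φ =>
        (∫ ω, S ω * (φ : ℝ → ℝ) (f ω) / e ω ∂μ) - ∫ ω, (φ : ℝ → ℝ) (f ω) ∂μ with hG
      have hlip : LipschitzWith ((η⁻¹ + 1).toNNReal) G := by
        refine LipschitzWith.of_dist_le_mul fun φ ψ => ?_
        have hφ : Integrable (fun x : ℝ => (φ : ℝ → ℝ) x) ν := L1.integrable_coeFn φ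
        have hψ : Integrable (fun x : ℝ => (ψ : ℝ → ℝ) x) ν := L1.integrable_coeFn ψ
        have h1 := key_int _ hφ
        have h2 := key_int _ hψ
        have hdiff : Integrable (fun ω => (φ : ℝ → ℝ) (f ω) - (ψ : ℝ → ℝ) (f ω)) μ :=
          h1.1.sub h2.1
        have hI : ∫ ω, ‖(φ : ℝ → ℝ) (f ω) - (ψ : ℝ → ℝ) (f ω)‖ ∂μ = ‖φ - ψ‖ := by
          have hmeas : AEStronglyMeasurable
              (fun x => ‖(φ : ℝ → ℝ) x - (ψ : ℝ → ℝ) x‖) ν :=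
            (hφ.aestronglyMeasurable.sub hψ.aestronglyMeasurable).norm
          have h1' : ∫ ω, ‖(φ : ℝ → ℝ) (f ω) - (ψ : ℝ → ℝ) (f ω)‖ ∂μ
              = ∫ x, ‖(φ : ℝ → ℝ) x - (ψ : ℝ → ℝ) x‖ ∂ν :=
            (integral_map hf.aemeasurable hmeas).symm
          rw [h1', L1.norm_eq_integral_norm]
          refine integral_congr_ae ?_
          filter_upwards [Lp.coeFn_sub φ ψ] with x hx
          rw [hx, Pi.sub_apply]
        have hb1 : |∫ ω, (S ω * (φ : ℝ → ℝ) (f ω) / e ω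
              - S ω * (ψ : ℝ → ℝ) (f ω) / e ω) ∂μ| ≤ η⁻¹ * ‖φ - ψ‖ := by
          rw [← Real.norm_eq_abs]
          refine le_trans (norm_integral_le_integral_norm _) ?_
          rw [← hI, ← integral_const_mul]
          refine integral_mono_ae (h1.2.sub h2.2).norm
            (hdiff.norm.const_mul η⁻¹) ?_
          filter_upwards [hlow] with ω hω
          have heω : 0 < e ω := hη.trans_le hω
          have : S ω * (φ : ℝ → ℝ) (f ω) / e ω - S ω * (ψ : ℝ → ℝ) (f ω) / e ω
              = S ω * ((φ : ℝ → ℝ) (f ω) - (ψ : ℝ → ℝ) (f ω)) / e ω := by ring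
          simp only [Real.norm_eq_abs]
          rw [this, abs_div, abs_mul, abs_of_pos heω]
          calc |S ω| * |(φ : ℝ → ℝ) (f ω) - (ψ : ℝ → ℝ) (f ω)| / e ω
              ≤ 1 * |(φ : ℝ → ℝ) (f ω) - (ψ : ℝ → ℝ) (f ω)| / η :=
                div_le_div₀ (by positivity)
                  (mul_le_mul_of_nonneg_right (hSabs ω) (abs_nonneg _)) hη hω
            _ = η⁻¹ * |(φ : ℝ → ℝ) (f ω) - (ψ : ℝ → ℝ) (f ω)| := by ring
        have hb2 : |∫ ω, ((φ : ℝ → ℝ) (f ω) - (ψ : ℝ → ℝ) (f ω)) ∂μ| ≤ ‖φ - ψ‖ := by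
          rw [← Real.norm_eq_abs, ← hI]
          exact norm_integral_le_integral_norm _
        have hGsub : G φ - G ψ
            = (∫ ω, (S ω * (φ : ℝ → ℝ) (f ω) / e ω
                - S ω * (ψ : ℝ → ℝ) (f ω) / e ω) ∂μ)
              - ∫ ω, ((φ : ℝ → ℝ) (f ω) - (ψ : ℝ → ℝ) (f ω)) ∂μ := by
          rw [integral_sub h1.2 h2.2, integral_sub h1.1 h2.1, hG]; ring
        rw [Real.dist_eq, dist_eq_norm]
        calc |G φ - G ψ| ≤ η⁻¹ * ‖φ - ψ‖ + ‖φ - ψ‖ := by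
              rw [hGsub]
              exact (abs_sub _ _).trans (add_le_add hb1 hb2)
          _ = (η⁻¹ + 1) * ‖φ - ψ‖ := by ring
          _ = ((η⁻¹ + 1).toNNReal : ℝ) * ‖φ - ψ‖ := by
              rw [Real.coe_toNNReal _ (by positivity)]
      have hset : {φL : ℝ →₁[ν] ℝ |
          ∫ ω, S ω * (φL : ℝ → ℝ) (f ω) / e ω ∂μ = ∫ ω, (φL : ℝ → ℝ) (f ω) ∂μ}
          = G ⁻¹' {0} := by
        ext φL
        simp [hG, sub_eq_zero, Set.mem_preimage]
      rw [hset]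
      exact isClosed_singleton.preimage hlip.continuous
    · -- ae congruence
      intro φ ψ hφψ hφ hPφ
      have hcomp : ∀ᵐ ω ∂μ, φ (f ω) = ψ (f ω) :=
        ae_of_ae_map hf.aemeasurable (hφψ : ∀ᵐ y ∂ν, φ y = ψ y)
      have h1 : (fun ω => S ω * φ (f ω) / e ω) =ᵐ[μ] fun ω => S ω * ψ (f ω) / e ω := by
        filter_upwards [hcomp] with ω hω; rw [hω]
      rw [← integral_congr_ae h1, ← integral_congr_ae hcomp, hPφ]
  have hid : Integrable (fun x : ℝ => x) ν :=
    (integrable_map_measure aestronglyMeasurable_id hf.aemeasurable).2 hfi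
  exact main hid

/-- Under unconfoundedness and overlap (`η ≤ e(X) ≤ 1−η` a.s.), the ATE admits
the inverse-probability-weighting representation:
`E[Y(1) − Y(0)] = E[ T·Y / e(X) − (1−T)·Y / (1 − e(X)) ]`, where `e(X) = E[T|X]` and
`Y = T·Y(1) + (1−T)·Y(0)` is the observed outcome. -/
theorem ate_ipw_representation
    {Ω : Type*} [MeasurableSpace Ω] [StandardBorelSpace Ω]
    {μ : Measure Ω} [IsProbabilityMeasure μ]
    {p : ℕ} (X : Ω → (Fin p → ℝ)) (T : Ω → ℝ) (Y0 Y1 : Ω → ℝ) (η : ℝ)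
    (hX : Measurable X) (hT : Measurable T)
    (hY0 : Measurable Y0) (hY1 : Measurable Y1)
    (hY0int : Integrable Y0 μ) (hY1int : Integrable Y1 μ)
    (hTbin : ∀ ω, T ω = 0 ∨ T ω = 1)
    (hη : 0 < η)
    -- unconfoundedness: (Y(0), Y(1)) ⫫ T | X
    (hUnconf : CondIndepFun (MeasurableSpace.comap X inferInstance) hX.comap_le
      (fun ω => (Y0 ω, Y1 ω)) T μ)
    -- overlap: η ≤ e(X) ≤ 1−η a.s.
    (hOverlap : ∀ᵐ ω ∂μ, η ≤ (μ[T | MeasurableSpace.comap X inferInstance]) ω ∧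
      (μ[T | MeasurableSpace.comap X inferInstance]) ω ≤ 1 - η) :
    (∫ ω, (Y1 ω - Y0 ω) ∂μ) =
      ∫ ω, (T ω * (T ω * Y1 ω + (1 - T ω) * Y0 ω)
              / (μ[T | MeasurableSpace.comap X inferInstance]) ω
          - (1 - T ω) * (T ω * Y1 ω + (1 - T ω) * Y0 ω)
              / (1 - (μ[T | MeasurableSpace.comap X inferInstance]) ω)) ∂μ := by

  have hm' : MeasurableSpace.comap X inferInstance ≤ ‹MeasurableSpace Ω› := hX.comap_le
  set e : Ω → ℝ := μ[T | MeasurableSpace.comap X inferInstance] with he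
  have hOlow : ∀ᵐ ω ∂μ, η ≤ e ω := hOverlap.mono fun ω h => h.1
  have hOhigh : ∀ᵐ ω ∂μ, e ω ≤ 1 - η := hOverlap.mono fun ω h => h.2
  have he_sm : StronglyMeasurable[MeasurableSpace.comap X inferInstance] e :=
    stronglyMeasurable_condExp
  have he_meas : Measurable e := (he_sm.mono hm').measurable
  have hTint : Integrable T μ := by
    refine Integrable.mono' (integrable_const (1:ℝ)) hT.aestronglyMeasurable ?_
    refine Filter.Eventually.of_forall fun ω => ?_
    rcases hTbin ω with h | h <;> simp [h]
  -- conditional independence of Y1 and T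
  have hCI1 : CondIndepFun (MeasurableSpace.comap X inferInstance) hX.comap_le Y1 T μ :=
    hUnconf.comp measurable_snd measurable_id
  -- conditional independence of Y0 and 1 - T
  set S2 : Ω → ℝ := fun ω => 1 - T ω with hS2
  have hS2meas : Measurable S2 := measurable_const.sub hT
  have hS2bin : ∀ ω, S2 ω = 0 ∨ S2 ω = 1 := by
    intro ω; rcases hTbin ω with h | h <;> simp [hS2, h]
  have hCI0 : CondIndepFun (MeasurableSpace.comap X inferInstance) hX.comap_le Y0 S2 μ :=
    hUnconf.comp measurable_fst (measurable_const.sub measurable_id)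
  -- conditional expectation of S2
  have he2 : μ[S2 | MeasurableSpace.comap X inferInstance] =ᵐ[μ] fun ω => 1 - e ω := by
    have h1 : μ[S2 | MeasurableSpace.comap X inferInstance]
        =ᵐ[μ] μ[(fun _ => (1:ℝ)) - T | MeasurableSpace.comap X inferInstance] := by
      refine condExp_congr_ae (Filter.Eventually.of_forall fun ω => ?_)
      simp [hS2]
    refine h1.trans ?_
    refine (condExp_sub (integrable_const 1) hTint _).trans ?_
    have h2 := condExp_const hm' (1:ℝ) (μ := μ)
    filter_upwards [Filter.EventuallyEq.rfl (f := e)] with ω _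
    simp only [Pi.sub_apply]
    rw [h2]
  have hlow2 : ∀ᵐ ω ∂μ, η ≤ (μ[S2 | MeasurableSpace.comap X inferInstance]) ω := by
    filter_upwards [he2, hOhigh] with ω h1 h2
    rw [h1]; linarith
  -- the two IPW identities
  have key1 : ∫ ω, T ω * Y1 ω / e ω ∂μ = ∫ ω, Y1 ω ∂μ :=
    ipw_key hm' hY1 hT hY1int hTbin hη hCI1 hOlow
  have key0' : ∫ ω, S2 ω * Y0 ω / (μ[S2 | MeasurableSpace.comap X inferInstance]) ω ∂μ
      = ∫ ω, Y0 ω ∂μ :=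
    ipw_key hm' hY0 hS2meas hY0int hS2bin hη hCI0 hlow2
  have key0 : ∫ ω, (1 - T ω) * Y0 ω / (1 - e ω) ∂μ = ∫ ω, Y0 ω ∂μ := by
    rw [← key0']
    refine integral_congr_ae ?_
    filter_upwards [he2] with ω hω
    rw [hω]
  -- integrability of the two terms
  have habsT : ∀ ω, |T ω| ≤ 1 := by
    intro ω; rcases hTbin ω with h | h <;> simp [h]
  have habsS2 : ∀ ω, |S2 ω| ≤ 1 := by
    intro ω; rcases hS2bin ω with h | h <;> simp [h]
  have int1 : Integrable (fun ω => T ω * Y1 ω / e ω) μ := by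
    refine Integrable.mono' (hY1int.norm.const_mul η⁻¹) ?_ ?_
    · simp only [div_eq_mul_inv]
      exact (hT.aestronglyMeasurable.mul hY1.aestronglyMeasurable).mul
        he_meas.inv.aestronglyMeasurable
    · filter_upwards [hOlow] with ω hω
      have heω : 0 < e ω := hη.trans_le hω
      simp only [Real.norm_eq_abs]
      rw [abs_div, abs_mul, abs_of_pos heω]
      calc |T ω| * |Y1 ω| / e ω ≤ 1 * |Y1 ω| / η :=
            div_le_div₀ (by positivity)
              (mul_le_mul_of_nonneg_right (habsT ω) (abs_nonneg _)) hη hω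
        _ = η⁻¹ * |Y1 ω| := by ring
  have int0 : Integrable (fun ω => (1 - T ω) * Y0 ω / (1 - e ω)) μ := by
    refine Integrable.mono' (hY0int.norm.const_mul η⁻¹) ?_ ?_
    · simp only [div_eq_mul_inv]
      exact ((measurable_const.sub hT).aestronglyMeasurable.mul
        hY0.aestronglyMeasurable).mul
        (measurable_const.sub he_meas).inv.aestronglyMeasurable
    · filter_upwards [hOhigh] with ω hω
      have heω : 0 < 1 - e ω := by linarith
      have hle : η ≤ 1 - e ω := by linarith
      simp only [Real.norm_eq_abs]
      rw [abs_div, abs_mul, abs_of_pos heω]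
      calc |1 - T ω| * |Y0 ω| / (1 - e ω) ≤ 1 * |Y0 ω| / η :=
            div_le_div₀ (by positivity)
              (mul_le_mul_of_nonneg_right (habsS2 ω) (abs_nonneg _)) hη hle
        _ = η⁻¹ * |Y0 ω| := by ring
  -- pointwise simplification of the IPW integrand
  have hpt : ∀ ω, T ω * (T ω * Y1 ω + (1 - T ω) * Y0 ω) / e ω
      - (1 - T ω) * (T ω * Y1 ω + (1 - T ω) * Y0 ω) / (1 - e ω)
      = T ω * Y1 ω / e ω - (1 - T ω) * Y0 ω / (1 - e ω) := by
    intro ω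
    rcases hTbin ω with h | h <;> rw [h] <;> ring_nf
  calc ∫ ω, (Y1 ω - Y0 ω) ∂μ = (∫ ω, Y1 ω ∂μ) - ∫ ω, Y0 ω ∂μ :=
        integral_sub hY1int hY0int
    _ = (∫ ω, T ω * Y1 ω / e ω ∂μ) - ∫ ω, (1 - T ω) * Y0 ω / (1 - e ω) ∂μ := by
        rw [key1, key0]
    _ = ∫ ω, (T ω * Y1 ω / e ω - (1 - T ω) * Y0 ω / (1 - e ω)) ∂μ :=
        (integral_sub int1 int0).symm
    _ = ∫ ω, (T ω * (T ω * Y1 ω + (1 - T ω) * Y0 ω) / e ω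
          - (1 - T ω) * (T ω * Y1 ω + (1 - T ω) * Y0 ω) / (1 - e ω)) ∂μ :=
        integral_congr_ae (Filter.Eventually.of_forall fun ω => (hpt ω).symm)
end

section
/- The collection of dimension reduction subspaces is closed under the subspace ordering in the following sense: if S₁ and S₂ are subspaces of ℝ^p with S₁ ⊆ S₂, and Y ⫫ X | P_{S₁}X (where P_S denotes orthogonal projection onto S), then Y ⫫ X | P_{S₂}X. -/
open MeasureTheory ProbabilityTheory MeasurableSpace

lemma drs_aux {Ω : Type*} (m₁ m₂ mX : MeasurableSpace Ω) [m0 : MeasurableSpace Ω]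
    {μ : Measure Ω} [IsProbabilityMeasure μ]
    (h12 : m₁ ≤ m₂) (h2X : m₂ ≤ mX) (hmX : mX ≤ m0)
    (A B : Set Ω) (hA : MeasurableSet A) (hBX : MeasurableSet[mX] B)
    (key : ∀ C : Set Ω, MeasurableSet[mX] C →
      (μ⟦A ∩ C | m₁⟧) =ᵐ[μ] fun ω => (μ⟦A | m₁⟧) ω * (μ⟦C | m₁⟧) ω) :
    (μ⟦A ∩ B | m₂⟧) =ᵐ[μ] fun ω => (μ⟦A | m₂⟧) ω * (μ⟦B | m₂⟧) ω := by
  have h1X : m₁ ≤ mX := h12.trans h2X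
  have h2 : m₂ ≤ m0 := h2X.trans hmX
  have h1 : m₁ ≤ m0 := h12.trans h2
  have hB : MeasurableSet B := hmX _ hBX
  have hindA : Integrable (A.indicator fun _ => (1:ℝ)) μ := (integrable_const 1).indicator hA
  have hindB : Integrable (B.indicator fun _ => (1:ℝ)) μ := (integrable_const 1).indicator hB
  have hmulfC : ∀ (C : Set Ω) (f : Ω → ℝ),
      f * (C.indicator fun _ => (1:ℝ)) = C.indicator f := by
    intro C f; funext x
    by_cases hx : x ∈ C <;> simp [Set.indicator_of_mem, Set.indicator_of_notMem, hx]
  have hmulCf : ∀ (C : Set Ω) (f : Ω → ℝ),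
      (C.indicator fun _ => (1:ℝ)) * f = C.indicator f := by
    intro C f; rw [mul_comm]; exact hmulfC C f
  -- Step 1 : μ⟦A|m₁⟧ =ᵐ μ⟦A|mX⟧
  have step1 : (μ⟦A | m₁⟧) =ᵐ[μ] (μ⟦A | mX⟧) := by
    refine ae_eq_condExp_of_forall_setIntegral_eq hmX hindA
      (fun C hCX hμC => integrable_condExp.integrableOn)
      (fun C hCX hμC => ?_)
      (stronglyMeasurable_condExp.mono h1X).aestronglyMeasurable
    have hC : MeasurableSet C := hmX _ hCX
    have hint1 : Integrable ((μ⟦A | m₁⟧) * C.indicator fun _ => (1:ℝ)) μ := by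
      rw [hmulfC]; exact integrable_condExp.indicator hC
    calc ∫ x in C, (μ⟦A | m₁⟧) x ∂μ
        = ∫ x, C.indicator (μ⟦A | m₁⟧) x ∂μ := (integral_indicator hC).symm
      _ = ∫ x, ((μ⟦A | m₁⟧) * C.indicator fun _ => (1:ℝ)) x ∂μ := by rw [hmulfC]
      _ = ∫ x, (μ[(μ⟦A | m₁⟧) * C.indicator fun _ => (1:ℝ)|m₁]) x ∂μ :=
          (integral_condExp h1).symm
      _ = ∫ x, (μ⟦A ∩ C | m₁⟧) x ∂μ := by
          refine integral_congr_ae ?_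
          exact (condExp_mul_of_stronglyMeasurable_left stronglyMeasurable_condExp hint1
            ((integrable_const 1).indicator hC)).trans (key C hCX).symm
      _ = ∫ x, (A ∩ C).indicator (fun _ => (1:ℝ)) x ∂μ :=
          integral_condExp h1
      _ = ∫ x in C, A.indicator (fun _ => (1:ℝ)) x ∂μ := by
          rw [← integral_indicator hC, Set.indicator_indicator, Set.inter_comm]
  -- (a) : μ⟦A|m₂⟧ =ᵐ μ⟦A|m₁⟧
  have ha : (μ⟦A | m₂⟧) =ᵐ[μ] (μ⟦A | m₁⟧) := by
    have t1 : (μ[(μ⟦A | mX⟧)|m₂]) =ᵐ[μ] (μ⟦A | m₂⟧) := condExp_condExp_of_le h2X hmX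
    have t2 : (μ[(μ⟦A | mX⟧)|m₂]) =ᵐ[μ] (μ[(μ⟦A | m₁⟧)|m₂]) := condExp_congr_ae step1.symm
    have t3 : (μ[(μ⟦A | m₁⟧)|m₂]) = (μ⟦A | m₁⟧) :=
      condExp_of_stronglyMeasurable h2 (stronglyMeasurable_condExp.mono h12) integrable_condExp
    exact t1.symm.trans (t2.trans (Filter.EventuallyEq.of_eq t3))
  -- (b) : μ⟦A∩B|m₂⟧ =ᵐ μ⟦A|m₁⟧ * μ⟦B|m₂⟧
  have hint2 : Integrable ((μ⟦A | m₁⟧) * B.indicator fun _ => (1:ℝ)) μ := by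
    rw [hmulfC]; exact integrable_condExp.indicator hB
  have hb : (μ⟦A ∩ B | m₂⟧) =ᵐ[μ] (μ⟦A | m₁⟧) * (μ⟦B | m₂⟧) := by
    have t1 : (μ[(μ⟦A ∩ B | mX⟧)|m₂]) =ᵐ[μ] (μ⟦A ∩ B | m₂⟧) := condExp_condExp_of_le h2X hmX
    have hind : (A ∩ B).indicator (fun _ => (1:ℝ)) =
        (B.indicator fun _ => (1:ℝ)) * (A.indicator fun _ => (1:ℝ)) := by
      rw [hmulCf, Set.indicator_indicator, Set.inter_comm]
    have t2 : (μ⟦A ∩ B | mX⟧) =ᵐ[μ] (B.indicator fun _ => (1:ℝ)) * (μ⟦A | mX⟧) := by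
      have he : (μ⟦A ∩ B | mX⟧)
          = μ[(B.indicator fun _ => (1:ℝ)) * (A.indicator fun _ => (1:ℝ))|mX] := by
        rw [← hind]
      rw [he]
      refine condExp_mul_of_stronglyMeasurable_left (stronglyMeasurable_const.indicator hBX) ?_ hindA
      rw [← hind]
      exact (integrable_const 1).indicator (hA.inter hB)
    have t3 : (B.indicator fun _ => (1:ℝ)) * (μ⟦A | mX⟧) =ᵐ[μ]
        (B.indicator fun _ => (1:ℝ)) * (μ⟦A | m₁⟧) := by
      filter_upwards [step1] with x hx
      simp only [Pi.mul_apply, hx]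
    have t4 : (μ[(μ⟦A | m₁⟧) * B.indicator (fun _ => (1:ℝ))|m₂]) =ᵐ[μ]
        (μ⟦A | m₁⟧) * (μ⟦B | m₂⟧) :=
      condExp_mul_of_stronglyMeasurable_left (stronglyMeasurable_condExp.mono h12) hint2 hindB
    calc (μ⟦A ∩ B | m₂⟧) =ᵐ[μ] μ[(μ⟦A ∩ B | mX⟧)|m₂] := t1.symm
      _ =ᵐ[μ] μ[(μ⟦A | m₁⟧) * B.indicator (fun _ => (1:ℝ))|m₂] := by
          refine condExp_congr_ae ((t2.trans t3).trans ?_)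
          rw [mul_comm]
      _ =ᵐ[μ] (μ⟦A | m₁⟧) * (μ⟦B | m₂⟧) := t4
  filter_upwards [ha, hb] with x hax hbx
  simp only [Pi.mul_apply] at hbx
  rw [hbx, hax]


/-- Dimension reduction subspaces are upward closed: if `S₁ ⊆ S₂` and
`Y ⫫ X | P_{S₁}X`, then `Y ⫫ X | P_{S₂}X`, where `P_S` is orthogonal projection onto `S`. -/
theorem drs_upward_closed
    {Ω : Type*} [MeasurableSpace Ω] [StandardBorelSpace Ω]
    {μ : Measure Ω} [IsProbabilityMeasure μ]
    {p : ℕ} (X : Ω → EuclideanSpace ℝ (Fin p)) (Y : Ω → ℝ)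
    (S₁ S₂ : Submodule ℝ (EuclideanSpace ℝ (Fin p)))
    (hX : Measurable X) (hY : Measurable Y)
    (hP₁ : Measurable fun ω => (S₁.orthogonalProjectionOnto (X ω) : EuclideanSpace ℝ (Fin p)))
    (hP₂ : Measurable fun ω => (S₂.orthogonalProjectionOnto (X ω) : EuclideanSpace ℝ (Fin p)))
    (hsub : S₁ ≤ S₂)
    (hDRS : CondIndepFun
      (MeasurableSpace.comap
        (fun ω => (S₁.orthogonalProjectionOnto (X ω) : EuclideanSpace ℝ (Fin p))) inferInstance)
      hP₁.comap_le Y X μ) :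
    CondIndepFun
      (MeasurableSpace.comap
        (fun ω => (S₂.orthogonalProjectionOnto (X ω) : EuclideanSpace ℝ (Fin p))) inferInstance)
      hP₂.comap_le Y X μ := by
  have hφ₁ : Measurable fun v : EuclideanSpace ℝ (Fin p) => (S₁.orthogonalProjectionOnto v :
      EuclideanSpace ℝ (Fin p)) :=
    (continuous_subtype_val.comp (S₁.orthogonalProjectionOnto).continuous).measurable
  have hφ₂ : Measurable fun v : EuclideanSpace ℝ (Fin p) => (S₂.orthogonalProjectionOnto v :
      EuclideanSpace ℝ (Fin p)) :=
    (continuous_subtype_val.comp (S₂.orthogonalProjectionOnto).continuous).measurable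
  have h12 : MeasurableSpace.comap
        (fun ω => (S₁.orthogonalProjectionOnto (X ω) : EuclideanSpace ℝ (Fin p))) inferInstance ≤
      MeasurableSpace.comap
        (fun ω => (S₂.orthogonalProjectionOnto (X ω) : EuclideanSpace ℝ (Fin p))) inferInstance := by
    have he : (fun ω => (S₁.orthogonalProjectionOnto (X ω) : EuclideanSpace ℝ (Fin p)))
        = (fun v : EuclideanSpace ℝ (Fin p) => (S₁.orthogonalProjectionOnto v :
            EuclideanSpace ℝ (Fin p)))
          ∘ (fun ω => (S₂.orthogonalProjectionOnto (X ω) : EuclideanSpace ℝ (Fin p))) := by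
      funext ω
      simp only [Function.comp_apply]
      rw [← Submodule.starProjection_apply S₂ (X ω), Submodule.orthogonalProjectionOnto_starProjection_of_le hsub]
    rw [he, ← MeasurableSpace.comap_comp]
    exact MeasurableSpace.comap_mono hφ₁.comap_le
  have h2X : MeasurableSpace.comap
        (fun ω => (S₂.orthogonalProjectionOnto (X ω) : EuclideanSpace ℝ (Fin p))) inferInstance ≤
      MeasurableSpace.comap X inferInstance := by
    have he : (fun ω => (S₂.orthogonalProjectionOnto (X ω) : EuclideanSpace ℝ (Fin p)))
        = (fun v : EuclideanSpace ℝ (Fin p) => (S₂.orthogonalProjectionOnto v :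
            EuclideanSpace ℝ (Fin p))) ∘ X := rfl
    rw [he, ← MeasurableSpace.comap_comp]
    exact MeasurableSpace.comap_mono hφ₂.comap_le
  rw [condIndepFun_iff_condExp_inter_preimage_eq_mul hY hX] at hDRS ⊢
  intro s t hs ht
  refine drs_aux _ _ (MeasurableSpace.comap X inferInstance) h12 h2X hX.comap_le
    (A := Y ⁻¹' s) (B := X ⁻¹' t) (hY hs) ⟨t, ht, rfl⟩ ?_
  rintro C ⟨u, hu, rfl⟩
  exact hDRS s u hs hu
end

section
/- Under the linearity condition E[X | P_S X] = P_S X for the central subspace S = S_{Y|X} (assuming E[X] = 0 and Cov(X) = I), the inverse regression mean lies in the central subspace: E[X | Y] ∈ S almost surely. -/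
open MeasureTheory ProbabilityTheory MeasurableSpace Set

lemma exists_countable_piSystem (β : Type*) [m : MeasurableSpace β]
    [MeasurableSpace.CountablyGenerated β] :
    ∃ C : Set (Set β), C.Countable ∧ IsPiSystem C ∧ generateFrom C = m := by
  set G := countableGeneratingSet β with hG
  refine ⟨{s | ∃ T : Set (Set β), T.Finite ∧ T ⊆ G ∧ T.Nonempty ∧ s = ⋂₀ T}, ?_, ?_, ?_⟩
  · have h1 : {T : Set (Set β) | T.Finite ∧ T ⊆ G}.Countable :=
      Set.countable_setOf_finite_subset (countable_countableGeneratingSet)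
    have : {s | ∃ T : Set (Set β), T.Finite ∧ T ⊆ G ∧ T.Nonempty ∧ s = ⋂₀ T} ⊆
        sInter '' {T : Set (Set β) | T.Finite ∧ T ⊆ G} := by
      rintro s ⟨T, hTf, hTG, -, rfl⟩
      exact ⟨T, ⟨hTf, hTG⟩, rfl⟩
    exact (h1.image _).mono this
  · rintro s ⟨T, hTf, hTG, hTne, rfl⟩ t ⟨U, hUf, hUG, hUne, rfl⟩ -
    exact ⟨T ∪ U, hTf.union hUf, union_subset hTG hUG, hTne.mono subset_union_left,
      (Set.sInter_union T U).symm⟩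
  · refine le_antisymm (generateFrom_le ?_) ?_
    · rintro s ⟨T, hTf, hTG, hTne, rfl⟩
      refine MeasurableSet.sInter hTf.countable fun t ht => ?_
      exact measurableSet_countableGeneratingSet (hTG ht)
    · conv_lhs => rw [← generateFrom_countableGeneratingSet (α := β)]
      refine generateFrom_le fun t ht => ?_
      exact measurableSet_generateFrom ⟨{t}, finite_singleton t, singleton_subset_iff.mpr ht,
        singleton_nonempty t, (sInter_singleton t).symm⟩

lemma ae_indepFun_of_condIndepFun {Ω β γ : Type*} {m' : MeasurableSpace Ω}
    [mΩ : MeasurableSpace Ω] [StandardBorelSpace Ω] {μ : Measure Ω} [IsProbabilityMeasure μ]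
    (hm' : m' ≤ mΩ)
    [mβ : MeasurableSpace β] [mγ : MeasurableSpace γ]
    [MeasurableSpace.CountablyGenerated β] [MeasurableSpace.CountablyGenerated γ]
    {f : Ω → β} {g : Ω → γ} (hf : Measurable f) (hg : Measurable g)
    (h : CondIndepFun m' hm' f g μ) :
    ∀ᵐ ω ∂μ, IndepFun f g (condExpKernel μ m' ω) := by
  obtain ⟨Cβ, hCβc, hCβpi, hCβgen⟩ := exists_countable_piSystem β
  obtain ⟨Cγ, hCγc, hCγpi, hCγgen⟩ := exists_countable_piSystem γ
  rw [CondIndepFun] at h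
  have h' := (Kernel.indepFun_iff_measure_inter_preimage_eq_mul).mp h
  have hae : ∀ᵐ ω ∂(μ.trim hm'), ∀ s ∈ Cβ, ∀ t ∈ Cγ,
      condExpKernel μ m' ω (f ⁻¹' s ∩ g ⁻¹' t)
        = condExpKernel μ m' ω (f ⁻¹' s) * condExpKernel μ m' ω (g ⁻¹' t) := by
    rw [ae_ball_iff hCβc]
    intro s hs
    rw [ae_ball_iff hCγc]
    intro t ht
    exact h' s t (hCβgen ▸ measurableSet_generateFrom hs)
      (hCγgen ▸ measurableSet_generateFrom ht)
  refine ae_of_ae_trim hm' ?_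
  filter_upwards [hae] with ω hω
  have hind : Indep (mβ.comap f) (mγ.comap g) (condExpKernel μ m' ω) := by
    refine IndepSets.indep hf.comap_le hg.comap_le
      (hCβpi.comap f) (hCγpi.comap g) ?_ ?_ ?_
    · rw [← hCβgen, comap_generateFrom]
      congr 1
    · rw [← hCγgen, comap_generateFrom]
      congr 1
    · rintro t1 t2 ⟨s, hs, rfl⟩ ⟨t, ht, rfl⟩
      exact ae_of_all _ (fun _ => hω s hs t ht)
  rw [IndepFun]
  exact hind

lemma aux_main {Ω : Type*} {m' mY : MeasurableSpace Ω}
    [mΩ : MeasurableSpace Ω] [StandardBorelSpace Ω]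
    {μ : Measure Ω} [IsProbabilityMeasure μ]
    {p : ℕ} (X : Ω → EuclideanSpace ℝ (Fin p)) (Y : Ω → ℝ)
    (S : Submodule ℝ (EuclideanSpace ℝ (Fin p)))
    (hX : Measurable X) (hY : Measurable Y)
    (hXsq : MemLp X 2 μ)
    (hm' : m' ≤ mΩ) (hmY : mY ≤ mΩ)
    (hmYeq : mY = MeasurableSpace.comap Y inferInstance)
    (hDRS : CondIndepFun m' hm' Y X μ)
    (hlin : μ[X | m'] =ᵐ[μ] fun ω => (S.orthogonalProjectionOnto (X ω) : EuclideanSpace ℝ (Fin p))) :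
    ∀ᵐ ω ∂μ,
      (μ[X | mY]) ω -
        (S.orthogonalProjectionOnto ((μ[X | mY]) ω) : EuclideanSpace ℝ (Fin p)) = 0 := by
  set PX : Ω → EuclideanSpace ℝ (Fin p) :=
    fun ω => (S.orthogonalProjectionOnto (X ω) : EuclideanSpace ℝ (Fin p)) with hPXdef
  have hXint : Integrable X μ := hXsq.integrable one_le_two
  have hPXint : Integrable PX μ :=
    (Submodule.subtypeL S ∘L (S.orthogonalProjectionOnto)).integrable_comp hXint
  have hPXmem : ∀ ω, PX ω ∈ S := fun ω => (S.orthogonalProjectionOnto (X ω)).2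
  -- Step 1 : conditional expectation of ⟪v, X⟫ given m' vanishes for v ⊥ S
  have h0 : ∀ v, v ∈ Sᗮ → μ[(fun ω => (inner ℝ v (X ω) : ℝ)) | m'] =ᵐ[μ] 0 := by
    intro v hv
    have hZint : Integrable (fun ω => (inner ℝ v (X ω) : ℝ)) μ :=
      (innerSL ℝ v).integrable_comp hXint
    have key : ∀ s : Set Ω, MeasurableSet[m'] s →
        ∫ ω in s, (inner ℝ v (X ω) : ℝ) ∂μ = 0 := by
      intro s hs
      have h2 : ∫ ω in s, X ω ∂μ = ∫ ω in s, PX ω ∂μ := by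
        rw [← setIntegral_condExp hm' hXint hs]
        exact setIntegral_congr_ae (hm' s hs) (hlin.mono fun ω hω _ => hω)
      have h4 : ∀ ω, (inner ℝ v (PX ω) : ℝ) = 0 := fun ω => by
        have := (Submodule.mem_orthogonal S v).mp hv (PX ω) (hPXmem ω)
        rwa [real_inner_comm] at this
      calc ∫ ω in s, (inner ℝ v (X ω) : ℝ) ∂μ
          = (inner ℝ v (∫ ω in s, X ω ∂μ) : ℝ) := (integral_inner hXint.integrableOn v)
        _ = (inner ℝ v (∫ ω in s, PX ω ∂μ) : ℝ) := by rw [h2]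
        _ = ∫ ω in s, (inner ℝ v (PX ω) : ℝ) ∂μ := (integral_inner hPXint.integrableOn v).symm
        _ = 0 := by simp [h4]
    have h5 : (0 : Ω → ℝ) =ᵐ[μ] μ[(fun ω => (inner ℝ v (X ω) : ℝ)) | m'] :=
      ae_eq_condExp_of_forall_setIntegral_eq hm' hZint
        (fun s _ _ => (integrable_zero _ _ _).integrableOn)
        (fun s hs _ => by rw [key s hs]; simp)
        ((@stronglyMeasurable_const Ω ℝ m' _ 0).aestronglyMeasurable)
    exact h5.symm
  -- Step 2 : ae independence under the conditional kernel
  have hAE : ∀ᵐ ω ∂μ, IndepFun Y X (condExpKernel μ m' ω) :=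
    ae_indepFun_of_condIndepFun hm' hY hX hDRS
  -- Step 3 : set integrals of ⟪v, X⟫ over Y-preimages vanish
  have h2 : ∀ v, v ∈ Sᗮ → ∀ A : Set ℝ, MeasurableSet A →
      ∫ ω in Y ⁻¹' A, (inner ℝ v (X ω) : ℝ) ∂μ = 0 := by
    intro v hv A hA
    set Z : Ω → ℝ := fun ω => (inner ℝ v (X ω) : ℝ) with hZdef
    have hZint : Integrable Z μ := (innerSL ℝ v).integrable_comp hXint
    set s : Set Ω := Y ⁻¹' A with hsdef
    have hsm : MeasurableSet s := hY hA
    set f1 : Ω → ℝ := s.indicator (fun _ => (1 : ℝ)) with hf1def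
    have hf1comp : f1 = fun ω => A.indicator (fun _ => (1 : ℝ)) (Y ω) := by
      funext ω
      by_cases h : ω ∈ s
      · have h' : Y ω ∈ A := h
        simp [hf1def, Set.indicator_of_mem h, Set.indicator_of_mem h']
      · have h' : Y ω ∉ A := h
        simp [hf1def, Set.indicator_of_notMem h, Set.indicator_of_notMem h']
    have hf1bdd : ∀ ω, ‖f1 ω‖ ≤ 1 := by
      intro ω
      by_cases h : ω ∈ s
      · simp [hf1def, Set.indicator_of_mem h]
      · simp [hf1def, Set.indicator_of_notMem h]
    have hf1int : Integrable f1 μ := (integrable_const (1 : ℝ)).indicator hsm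
    have hmul_int : Integrable (fun ω => f1 ω * Z ω) μ :=
      hZint.bdd_mul hf1int.aestronglyMeasurable (ae_of_all _ hf1bdd)
    have hprod : μ[(fun ω => f1 ω * Z ω) | m']
        =ᵐ[μ] fun ω => ((μ[f1 | m']) ω) * ((μ[Z | m']) ω) := by
      have k1 := condExp_ae_eq_integral_condExpKernel hm' hmul_int
      have k2 := condExp_ae_eq_integral_condExpKernel hm' hf1int
      have k3 := condExp_ae_eq_integral_condExpKernel hm' hZint
      have k4 := hZint.condExpKernel_ae (m := m')
      filter_upwards [hAE, k1, k2, k3, k4] with ω e0 e1 e2 e3 e4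
      rw [e1, e2, e3]
      have hIF : IndepFun (fun ω' => A.indicator (fun _ => (1 : ℝ)) (Y ω')) Z
          (condExpKernel μ m' ω) :=
        e0.comp (measurable_const.indicator hA) (innerSL ℝ v).continuous.measurable
      have hint1 : Integrable (fun ω' => A.indicator (fun _ => (1 : ℝ)) (Y ω'))
          (condExpKernel μ m' ω) := by
        rw [← hf1comp]
        exact (integrable_const (1 : ℝ)).indicator hsm
      have hres := hIF.integral_fun_mul_eq_mul_integral hint1.aestronglyMeasurable e4.aestronglyMeasurable
      calc ∫ y, f1 y * Z y ∂(condExpKernel μ m' ω)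
          = ∫ y, (A.indicator (fun _ => (1 : ℝ)) (Y y)) * Z y ∂(condExpKernel μ m' ω) := by
            rw [hf1comp]
        _ = (∫ y, A.indicator (fun _ => (1 : ℝ)) (Y y) ∂(condExpKernel μ m' ω))
              * ∫ y, Z y ∂(condExpKernel μ m' ω) := hres
        _ = (∫ y, f1 y ∂(condExpKernel μ m' ω)) * ∫ y, Z y ∂(condExpKernel μ m' ω) := by
            rw [hf1comp]
    have hzero : μ[(fun ω => f1 ω * Z ω) | m'] =ᵐ[μ] 0 := by
      filter_upwards [hprod, h0 v hv] with ω e1 e2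
      rw [e1]
      have : (μ[Z | m']) ω = 0 := e2
      rw [this, mul_zero]
      rfl
    have hind_mul : ∀ ω, f1 ω * Z ω = s.indicator Z ω := by
      intro ω
      by_cases h : ω ∈ s
      · simp [hf1def, Set.indicator_of_mem h]
      · simp [hf1def, Set.indicator_of_notMem h]
    calc ∫ ω in s, Z ω ∂μ = ∫ ω, s.indicator Z ω ∂μ := (integral_indicator hsm).symm
      _ = ∫ ω, f1 ω * Z ω ∂μ := by simp_rw [hind_mul]
      _ = ∫ ω, (μ[(fun ω => f1 ω * Z ω) | m']) ω ∂μ := (integral_condExp hm').symm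
      _ = ∫ ω, (0 : Ω → ℝ) ω ∂μ := integral_congr_ae hzero
      _ = 0 := by simp
  -- Step 4 : ⟪v, E[X|Y]⟫ = 0 a.e. for v ⊥ S
  have h3 : ∀ v, v ∈ Sᗮ → (fun ω => (inner ℝ v ((μ[X | mY]) ω) : ℝ)) =ᵐ[μ] 0 := by
    intro v hv
    have hWint : Integrable (μ[X | mY]) μ := integrable_condExp
    have hwint : Integrable (fun ω => (inner ℝ v ((μ[X | mY]) ω) : ℝ)) μ :=
      (innerSL ℝ v).integrable_comp hWint
    have h5 : (fun ω => (inner ℝ v ((μ[X | mY]) ω) : ℝ)) =ᵐ[μ] μ[(0 : Ω → ℝ) | mY] := by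
      refine ae_eq_condExp_of_forall_setIntegral_eq hmY (integrable_zero _ _ _)
        (fun s _ _ => hwint.integrableOn) (fun s hs _ => ?_) ?_
      · rw [hmYeq] at hs
        obtain ⟨A, hA, rfl⟩ := hs
        calc ∫ ω in Y ⁻¹' A, (inner ℝ v ((μ[X | mY]) ω) : ℝ) ∂μ
            = (inner ℝ v (∫ ω in Y ⁻¹' A, (μ[X | mY]) ω ∂μ) : ℝ) :=
              integral_inner integrable_condExp.integrableOn v
          _ = (inner ℝ v (∫ ω in Y ⁻¹' A, X ω ∂μ) : ℝ) := by
              rw [setIntegral_condExp hmY hXint (hmYeq ▸ ⟨A, hA, rfl⟩)]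
          _ = ∫ ω in Y ⁻¹' A, (inner ℝ v (X ω) : ℝ) ∂μ :=
              (integral_inner hXint.integrableOn v).symm
          _ = 0 := h2 v hv A hA
          _ = ∫ ω in Y ⁻¹' A, (0 : Ω → ℝ) ω ∂μ := by simp
      · exact (innerSL ℝ v).continuous.comp_aestronglyMeasurable
          stronglyMeasurable_condExp.aestronglyMeasurable
    refine h5.trans ?_
    rw [condExp_zero]
  -- Step 5 : conclude
  obtain ⟨T, hT⟩ : (Sᗮ).FG := IsNoetherian.noetherian Sᗮ
  have hball : ∀ᵐ ω ∂μ, ∀ v ∈ (T : Set (EuclideanSpace ℝ (Fin p))),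
      (inner ℝ v ((μ[X | mY]) ω) : ℝ) = 0 := by
    rw [ae_ball_iff T.countable_toSet]
    intro v hvT
    have hv : v ∈ Sᗮ := by
      rw [← hT]
      exact Submodule.subset_span hvT
    filter_upwards [h3 v hv] with ω hω using hω
  filter_upwards [hball] with ω hω
  set u : EuclideanSpace ℝ (Fin p) := (μ[X | mY]) ω with hudef
  have hDmem : u - (S.orthogonalProjectionOnto u : EuclideanSpace ℝ (Fin p)) ∈ Sᗮ :=
    Submodule.sub_starProjection_mem_orthogonal (K := S) u
  have hTD : ∀ v ∈ (T : Set (EuclideanSpace ℝ (Fin p))),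
      (inner ℝ v (u - (S.orthogonalProjectionOnto u : EuclideanSpace ℝ (Fin p))) : ℝ) = 0 := by
    intro v hvT
    have hv : v ∈ Sᗮ := by rw [← hT]; exact Submodule.subset_span hvT
    have hvP : (inner ℝ v ((S.orthogonalProjectionOnto u : EuclideanSpace ℝ (Fin p))) : ℝ) = 0 := by
      have := (Submodule.mem_orthogonal S v).mp hv _ (S.orthogonalProjectionOnto u).2
      rwa [real_inner_comm] at this
    rw [inner_sub_right, hω v hvT, hvP, sub_zero]
  have hallD : ∀ w, w ∈ Sᗮ →
      (inner ℝ w (u - (S.orthogonalProjectionOnto u : EuclideanSpace ℝ (Fin p))) : ℝ) = 0 := by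
    intro w hw
    rw [← hT] at hw
    refine Submodule.span_induction hTD (by simp) (fun a b _ _ ha hb => ?_)
      (fun c a _ ha => ?_) hw
    · rw [inner_add_left, ha, hb, add_zero]
    · rw [real_inner_smul_left, ha, mul_zero]
  have hfin : (inner ℝ (u - (S.orthogonalProjectionOnto u : EuclideanSpace ℝ (Fin p)))
      (u - (S.orthogonalProjectionOnto u : EuclideanSpace ℝ (Fin p))) : ℝ) = 0 :=
    hallD _ hDmem
  exact inner_self_eq_zero.mp hfin


/-- For standardized `X` (mean zero, identity covariance), if `S` is a dimension
reduction subspace (`Y ⫫ X | P_S X`) and the linearity condition `E[X | P_S X] = P_S X` holds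
a.s., then the inverse regression mean lies in the central subspace:
`(I − P_S) E[X | Y] = 0` a.s. -/
theorem inverse_regression_mean_in_central_subspace
    {Ω : Type*} [MeasurableSpace Ω] [StandardBorelSpace Ω]
    {μ : Measure Ω} [IsProbabilityMeasure μ]
    {p : ℕ} (X : Ω → EuclideanSpace ℝ (Fin p)) (Y : Ω → ℝ)
    (S : Submodule ℝ (EuclideanSpace ℝ (Fin p)))
    (hX : Measurable X) (hY : Measurable Y)
    (hXsq : MemLp X 2 μ)
    -- standardization: mean zero and identity covariance
    (hmean : ∫ ω, X ω ∂μ = 0)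
    (hcov : ∀ i j : Fin p, ∫ ω, X ω i * X ω j ∂μ = if i = j then 1 else 0)
    (hP : Measurable fun ω => (S.orthogonalProjectionOnto (X ω) : EuclideanSpace ℝ (Fin p)))
    -- S is a dimension reduction subspace: Y ⫫ X | P_S X
    (hDRS : CondIndepFun
      (MeasurableSpace.comap
        (fun ω => (S.orthogonalProjectionOnto (X ω) : EuclideanSpace ℝ (Fin p))) inferInstance)
      hP.comap_le Y X μ)
    -- linearity condition: E[X | P_S X] = P_S X a.s.
    (hlin : μ[X | MeasurableSpace.comap
        (fun ω => (S.orthogonalProjectionOnto (X ω) : EuclideanSpace ℝ (Fin p))) inferInstance]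
      =ᵐ[μ] fun ω => (S.orthogonalProjectionOnto (X ω) : EuclideanSpace ℝ (Fin p))) :
    ∀ᵐ ω ∂μ,
      (μ[X | MeasurableSpace.comap Y inferInstance]) ω -
        (S.orthogonalProjectionOnto ((μ[X | MeasurableSpace.comap Y inferInstance]) ω)
          : EuclideanSpace ℝ (Fin p)) = 0 :=
  aux_main X Y S hX hY hXsq hP.comap_le hY.comap_le rfl hDRS hlin
end

section
/- If Z is a balancing score in the sense that (Y(0), Y(1)) ⫫ T | Z and 0 < P(T=1|Z) < 1 a.s., then for each t ∈ {0,1}, E[Y(t) | Z] = E[Y | T = t, Z] almost surely, where Y is the observed outcome; i.e., the conditional means of potential outcomes are identified from observables given the balancing score. -/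
open MeasureTheory ProbabilityTheory MeasurableSpace

lemma aux_indicator_condexp_join {Ω : Type*} {m n : MeasurableSpace Ω} [mΩ : MeasurableSpace Ω]
    (hm : m ≤ mΩ) {μ : Measure Ω} [IsProbabilityMeasure μ]
    {W : Ω → ℝ × ℝ} (hW : Measurable W)
    (hn_def : n = m ⊔ MeasurableSpace.comap W inferInstance)
    {A : Set Ω} (hA : MeasurableSet A)
    (hprod : ∀ B : Set (ℝ × ℝ), MeasurableSet B →
      (μ[(W ⁻¹' B ∩ A).indicator (fun _ => (1:ℝ)) | m] =ᵐ[μ]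
        fun ω => (μ[(W ⁻¹' B).indicator (fun _ => (1:ℝ)) | m]) ω *
          (μ[A.indicator (fun _ => (1:ℝ)) | m]) ω)) :
    μ[A.indicator (fun _ => (1:ℝ)) | n] =ᵐ[μ]
      μ[A.indicator (fun _ => (1:ℝ)) | m] := by
  have hcomap_le : MeasurableSpace.comap W inferInstance ≤ mΩ := hW.comap_le
  have hn : n ≤ mΩ := hn_def ▸ sup_le hm hcomap_le
  have hmn : m ≤ n := hn_def ▸ le_sup_left
  set χ : Ω → ℝ := A.indicator (fun _ => (1:ℝ)) with hχ_def
  set g : Ω → ℝ := μ[χ | m] with hg_def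
  have hχ_int : Integrable χ μ := (integrable_const (1:ℝ)).indicator hA
  have hg_int : Integrable g μ := integrable_condExp
  -- the generating π-system
  set C : Set (Set Ω) := {u | ∃ s B, MeasurableSet[m] s ∧ MeasurableSet B ∧ u = s ∩ W ⁻¹' B}
    with hC_def
  have hC_gen : n = MeasurableSpace.generateFrom C := by
    rw [hn_def]
    refine le_antisymm (sup_le ?_ ?_) ?_
    · intro s hs
      exact measurableSet_generateFrom ⟨s, Set.univ, hs, MeasurableSet.univ, by simp⟩
    · rintro u ⟨B, hB, rfl⟩
      exact measurableSet_generateFrom ⟨Set.univ, B, MeasurableSet.univ, hB, by simp⟩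
    · rw [MeasurableSpace.generateFrom_le_iff]
      rintro u ⟨s, B, hs, hB, rfl⟩
      exact MeasurableSet.inter (le_sup_left (b := MeasurableSpace.comap W inferInstance) s hs)
        (le_sup_right (a := m) (W ⁻¹' B) ⟨B, hB, rfl⟩)
  have hC_pi : IsPiSystem C := by
    rintro _ ⟨s₁, B₁, hs₁, hB₁, rfl⟩ _ ⟨s₂, B₂, hs₂, hB₂, rfl⟩ -
    refine ⟨s₁ ∩ s₂, B₁ ∩ B₂, hs₁.inter hs₂, hB₁.inter hB₂, ?_⟩
    ext ω; simp only [Set.mem_inter_iff, Set.mem_preimage]; tauto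
  -- the key set-integral identity
  have key : ∀ u, MeasurableSet[n] u → ∫ x in u, g x ∂μ = ∫ x in u, χ x ∂μ := by
    intro u hu
    refine MeasurableSpace.induction_on_inter (m := n)
      (C := fun u _ => ∫ x in u, g x ∂μ = ∫ x in u, χ x ∂μ) hC_gen hC_pi ?_ ?_ ?_ ?_ u hu
    · simp
    · rintro _ ⟨s, B, hs, hB, rfl⟩
      have hsm : MeasurableSet[mΩ] s := hm s hs
      have hBm : MeasurableSet[mΩ] (W ⁻¹' B) := hW hB
      set χB : Ω → ℝ := (W ⁻¹' B).indicator (fun _ => (1:ℝ)) with hχB_def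
      have hχB_int : Integrable χB μ := (integrable_const (1:ℝ)).indicator hBm
      have hgχB_int : Integrable (g * χB) μ := by
        refine hg_int.abs.mono'
          (hg_int.aestronglyMeasurable.mul hχB_int.aestronglyMeasurable) ?_
        filter_upwards with x
        simp only [Pi.mul_apply, norm_mul, Real.norm_eq_abs, Pi.abs_apply]
        by_cases hx : x ∈ W ⁻¹' B <;>
          simp [hχB_def, Set.indicator_of_mem, Set.indicator_of_notMem, hx, abs_nonneg]
      have hindg : ∀ x, (W ⁻¹' B).indicator g x = (g * χB) x := by
        intro x
        by_cases hx : x ∈ W ⁻¹' B <;>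
          simp [hχB_def, Set.indicator_of_mem, Set.indicator_of_notMem, hx]
      have hmul : μ[g * χB | m] =ᵐ[μ] g * μ[χB | m] :=
        condExp_mul_of_stronglyMeasurable_left stronglyMeasurable_condExp hgχB_int hχB_int
      have hLHS : ∫ x in s ∩ W ⁻¹' B, g x ∂μ
          = ∫ x in s, g x * (μ[χB | m]) x ∂μ := by
        rw [← setIntegral_indicator hBm]
        calc ∫ x in s, (W ⁻¹' B).indicator g x ∂μ
            = ∫ x in s, (g * χB) x ∂μ := setIntegral_congr_fun hsm (fun x _ => hindg x)
          _ = ∫ x in s, (μ[g * χB | m]) x ∂μ := (setIntegral_condExp hm hgχB_int hs).symm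
          _ = ∫ x in s, g x * (μ[χB | m]) x ∂μ := by
              refine setIntegral_congr_ae hsm ?_
              filter_upwards [hmul] with x hx _
              simpa using hx
      have hRHS : ∫ x in s ∩ W ⁻¹' B, χ x ∂μ
          = ∫ x in s, (μ[χB | m]) x * g x ∂μ := by
        rw [← setIntegral_indicator hBm]
        have hind2 : (W ⁻¹' B).indicator χ = (W ⁻¹' B ∩ A).indicator (fun _ => (1:ℝ)) := by
          rw [hχ_def, Set.indicator_indicator]
        have hint2 : Integrable ((W ⁻¹' B ∩ A).indicator (fun _ => (1:ℝ))) μ :=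
          (integrable_const (1:ℝ)).indicator (hBm.inter hA)
        calc ∫ x in s, (W ⁻¹' B).indicator χ x ∂μ
            = ∫ x in s, (W ⁻¹' B ∩ A).indicator (fun _ => (1:ℝ)) x ∂μ := by rw [hind2]
          _ = ∫ x in s, (μ[(W ⁻¹' B ∩ A).indicator (fun _ => (1:ℝ)) | m]) x ∂μ :=
              (setIntegral_condExp hm hint2 hs).symm
          _ = ∫ x in s, (μ[χB | m]) x * g x ∂μ := by
              refine setIntegral_congr_ae hsm ?_
              filter_upwards [hprod B hB] with x hx _
              exact hx
      rw [hLHS, hRHS]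
      exact setIntegral_congr_fun hsm (fun x _ => mul_comm _ _)
    · intro t htn ht
      have htm : MeasurableSet[mΩ] t := hn t htn
      have h1 := integral_add_compl htm hg_int
      have h2 := integral_add_compl htm hχ_int
      have h3 : ∫ x, g x ∂μ = ∫ x, χ x ∂μ := integral_condExp hm
      linarith
    · intro f hdisj hmeas hCf
      have hmeas' : ∀ i, MeasurableSet[mΩ] (f i) := fun i => hn _ (hmeas i)
      rw [integral_iUnion hmeas' hdisj hg_int.integrableOn,
        integral_iUnion hmeas' hdisj hχ_int.integrableOn]
      exact tsum_congr fun i => hCf i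
  exact (ae_eq_condExp_of_forall_setIntegral_eq hn hχ_int
    (fun s _ _ => hg_int.integrableOn)
    (fun s hs _ => key s hs)
    ((stronglyMeasurable_condExp (m := m) (μ := μ) (f := χ)).mono hmn).aestronglyMeasurable).symm

lemma aux_pullout {Ω : Type*} {m n : MeasurableSpace Ω} [mΩ : MeasurableSpace Ω]
    (hm : m ≤ mΩ) (hn : n ≤ mΩ) (hmn : m ≤ n)
    {μ : Measure Ω} [IsProbabilityMeasure μ]
    {A : Set Ω} (hA : MeasurableSet A)
    (hAcond : μ[A.indicator (fun _ => (1:ℝ)) | n] =ᵐ[μ] μ[A.indicator (fun _ => (1:ℝ)) | m])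
    {f : Ω → ℝ} (hf : Integrable f μ) (hfn : StronglyMeasurable[n] f) :
    μ[fun ω => f ω * A.indicator (fun _ => (1:ℝ)) ω | m] =ᵐ[μ]
      fun ω => (μ[A.indicator (fun _ => (1:ℝ)) | m]) ω * (μ[f | m]) ω := by
  set χ : Ω → ℝ := A.indicator (fun _ => (1:ℝ)) with hχ_def
  set g : Ω → ℝ := μ[χ | m] with hg_def
  have hχ_int : Integrable χ μ := (integrable_const (1:ℝ)).indicator hA
  have hχ01 : ∀ x, χ x = 0 ∨ χ x = 1 := by
    intro x
    by_cases hx : x ∈ A <;>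
      simp [hχ_def, Set.indicator_of_mem, Set.indicator_of_notMem, hx]
  have hfχ_int : Integrable (f * χ) μ := by
    refine hf.abs.mono' (hf.aestronglyMeasurable.mul hχ_int.aestronglyMeasurable) ?_
    filter_upwards with x
    simp only [Pi.mul_apply, norm_mul, Real.norm_eq_abs, Pi.abs_apply]
    rcases hχ01 x with h | h <;> simp [h, abs_nonneg]
  have hg_bound : ∀ᵐ x ∂μ, |g x| ≤ 1 := by
    have h0 : (0:Ω → ℝ) ≤ᵐ[μ] g := condExp_nonneg (Filter.Eventually.of_forall fun x => by
      rcases hχ01 x with h | h <;> simp [h])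
    have h1 : g ≤ᵐ[μ] μ[(fun _ => (1:ℝ)) | m] :=
      condExp_mono hχ_int (integrable_const 1) (Filter.Eventually.of_forall fun x => by
        rcases hχ01 x with h | h <;> simp [h])
    have hc : μ[(fun _ => (1:ℝ)) | m] = fun _ => (1:ℝ) := condExp_const hm 1
    rw [hc] at h1
    filter_upwards [h0, h1] with x hx0 hx1
    simp only [Pi.zero_apply] at hx0
    rw [abs_le]
    exact ⟨by linarith, hx1⟩
  have hgf_int : Integrable (g * f) μ := by
    refine hf.abs.mono'
      (integrable_condExp.aestronglyMeasurable.mul hf.aestronglyMeasurable) ?_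
    filter_upwards [hg_bound] with x hx
    simp only [Pi.mul_apply, norm_mul, Real.norm_eq_abs, Pi.abs_apply]
    calc |g x| * |f x| ≤ 1 * |f x| := mul_le_mul_of_nonneg_right hx (abs_nonneg _)
      _ = |f x| := one_mul _
  have step1 : μ[f * χ | m] =ᵐ[μ] μ[μ[f * χ | n] | m] :=
    (condExp_condExp_of_le hmn hn).symm
  have step2 : μ[f * χ | n] =ᵐ[μ] f * μ[χ | n] :=
    condExp_mul_of_stronglyMeasurable_left hfn hfχ_int hχ_int
  have step3 : f * μ[χ | n] =ᵐ[μ] g * f := by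
    filter_upwards [hAcond] with x hx
    simp only [Pi.mul_apply, hx]
    exact mul_comm _ _
  have step4 : μ[μ[f * χ | n] | m] =ᵐ[μ] μ[g * f | m] :=
    condExp_congr_ae (step2.trans step3)
  have step5 : μ[g * f | m] =ᵐ[μ] g * μ[f | m] :=
    condExp_mul_of_stronglyMeasurable_left stronglyMeasurable_condExp hgf_int hf
  have htot : μ[f * χ | m] =ᵐ[μ] g * μ[f | m] := (step1.trans step4).trans step5
  filter_upwards [htot] with x hx
  exact hx

/-- If `(Y(0),Y(1)) ⫫ T | Z` for a balancing score `Z` with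
`0 < P(T=1|Z) < 1` a.s., then `E[Y(1) | Z] = E[Y | T=1, Z]` and `E[Y(0) | Z] = E[Y | T=0, Z]`
a.s., where `Y = T·Y(1) + (1−T)·Y(0)` and the conditional means on the treatment arms are
`E[Y | T=1, Z] = E[T·Y | Z] / E[T | Z]` and `E[Y | T=0, Z] = E[(1−T)·Y | Z] / (1 − E[T | Z])`. -/
theorem potential_outcome_means_identified_given_balancing_score
    {Ω : Type*} [MeasurableSpace Ω] [StandardBorelSpace Ω]
    {μ : Measure Ω} [IsProbabilityMeasure μ]
    {k : ℕ} (Z : Ω → (Fin k → ℝ)) (T : Ω → ℝ) (Y0 Y1 : Ω → ℝ)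
    (hZ : Measurable Z) (hT : Measurable T)
    (hY0 : Measurable Y0) (hY1 : Measurable Y1)
    (hY0int : Integrable Y0 μ) (hY1int : Integrable Y1 μ)
    (hTbin : ∀ ω, T ω = 0 ∨ T ω = 1)
    -- (Y(0), Y(1)) ⫫ T | Z
    (hUnconf : CondIndepFun (MeasurableSpace.comap Z inferInstance) hZ.comap_le
      (fun ω => (Y0 ω, Y1 ω)) T μ)
    -- overlap: 0 < P(T=1|Z) < 1 a.s.
    (hOverlap : ∀ᵐ ω ∂μ, 0 < (μ[T | MeasurableSpace.comap Z inferInstance]) ω ∧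
      (μ[T | MeasurableSpace.comap Z inferInstance]) ω < 1) :
    (μ[Y1 | MeasurableSpace.comap Z inferInstance]
      =ᵐ[μ] fun ω =>
        (μ[fun ω' => T ω' * (T ω' * Y1 ω' + (1 - T ω') * Y0 ω') |
            MeasurableSpace.comap Z inferInstance]) ω
          / (μ[T | MeasurableSpace.comap Z inferInstance]) ω) ∧
    (μ[Y0 | MeasurableSpace.comap Z inferInstance]
      =ᵐ[μ] fun ω =>
        (μ[fun ω' => (1 - T ω') * (T ω' * Y1 ω' + (1 - T ω') * Y0 ω') |
            MeasurableSpace.comap Z inferInstance]) ω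
          / (1 - (μ[T | MeasurableSpace.comap Z inferInstance]) ω)) := by
  have hW : Measurable (fun ω => (Y0 ω, Y1 ω)) := hY0.prodMk hY1
  have hm : MeasurableSpace.comap Z inferInstance ≤ ‹MeasurableSpace Ω› := hZ.comap_le
  have hn : (MeasurableSpace.comap Z inferInstance ⊔
      MeasurableSpace.comap (fun ω => (Y0 ω, Y1 ω)) inferInstance) ≤ ‹MeasurableSpace Ω› :=
    sup_le hm hW.comap_le
  have hmn : MeasurableSpace.comap Z inferInstance ≤
      (MeasurableSpace.comap Z inferInstance ⊔
        MeasurableSpace.comap (fun ω => (Y0 ω, Y1 ω)) inferInstance) := le_sup_left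
  have hCI := (condIndepFun_iff_condExp_inter_preimage_eq_mul hW hT).mp hUnconf
  have hA1 : MeasurableSet (T ⁻¹' {1}) := hT (measurableSet_singleton 1)
  have hA0 : MeasurableSet (T ⁻¹' {0}) := hT (measurableSet_singleton 0)
  have hTeq : T = (T ⁻¹' {1}).indicator (fun _ => (1:ℝ)) := by
    funext ω
    rcases hTbin ω with h | h <;>
      simp [Set.indicator_apply, Set.mem_preimage, h]
  have h1Teq : (fun ω => (1:ℝ) - T ω) = (T ⁻¹' {0}).indicator (fun _ => (1:ℝ)) := by
    funext ω
    rcases hTbin ω with h | h <;>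
      simp [Set.indicator_apply, Set.mem_preimage, h]
  have hTint : Integrable T μ := by
    rw [hTeq]; exact (integrable_const 1).indicator hA1
  -- measurability of Y0, Y1 w.r.t. the join
  have hWc : Measurable[MeasurableSpace.comap (fun ω => (Y0 ω, Y1 ω)) inferInstance]
      (fun ω => (Y0 ω, Y1 ω)) := fun s hs => ⟨s, hs, rfl⟩
  have hY1n : StronglyMeasurable[MeasurableSpace.comap Z inferInstance ⊔
      MeasurableSpace.comap (fun ω => (Y0 ω, Y1 ω)) inferInstance] Y1 :=
    ((measurable_snd.comp hWc).stronglyMeasurable).mono le_sup_right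
  have hY0n : StronglyMeasurable[MeasurableSpace.comap Z inferInstance ⊔
      MeasurableSpace.comap (fun ω => (Y0 ω, Y1 ω)) inferInstance] Y0 :=
    ((measurable_fst.comp hWc).stronglyMeasurable).mono le_sup_right
  -- the two join lemmas
  have join1 := aux_indicator_condexp_join hm hW rfl hA1
    (fun B hB => hCI B {1} hB (measurableSet_singleton 1))
  have join0 := aux_indicator_condexp_join hm hW rfl hA0
    (fun B hB => hCI B {0} hB (measurableSet_singleton 0))
  have pull1 := aux_pullout hm hn hmn hA1 join1 hY1int hY1n
  have pull0 := aux_pullout hm hn hmn hA0 join0 hY0int hY0n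
  -- rewrite observed products
  have hfun1 : (fun ω' => T ω' * (T ω' * Y1 ω' + (1 - T ω') * Y0 ω'))
      = fun ω' => Y1 ω' * (T ⁻¹' {1}).indicator (fun _ => (1:ℝ)) ω' := by
    funext ω
    rcases hTbin ω with h | h <;>
      simp [Set.indicator_apply, Set.mem_preimage, h]
  have hfun0 : (fun ω' => (1 - T ω') * (T ω' * Y1 ω' + (1 - T ω') * Y0 ω'))
      = fun ω' => Y0 ω' * (T ⁻¹' {0}).indicator (fun _ => (1:ℝ)) ω' := by
    funext ω
    rcases hTbin ω with h | h <;>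
      simp [Set.indicator_apply, Set.mem_preimage, h]
  have hTcond : μ[T | MeasurableSpace.comap Z inferInstance]
      = μ[(T ⁻¹' {1}).indicator (fun _ => (1:ℝ)) | MeasurableSpace.comap Z inferInstance] := by
    conv_lhs => rw [hTeq]
  -- conditional expectation of the indicator of {T = 0}
  have hc0 : μ[(T ⁻¹' {0}).indicator (fun _ => (1:ℝ)) | MeasurableSpace.comap Z inferInstance]
      =ᵐ[μ] fun ω => 1 - (μ[T | MeasurableSpace.comap Z inferInstance]) ω := by
    have hsubeq : (fun _ => (1:ℝ)) - T = (T ⁻¹' {0}).indicator (fun _ => (1:ℝ)) := by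
      funext ω
      have := congrFun h1Teq ω
      simpa using this
    have h := condExp_sub (μ := μ) (m := MeasurableSpace.comap Z inferInstance)
      (f := fun _ => (1:ℝ)) (g := T) (integrable_const 1) hTint
    rw [hsubeq, condExp_const hm] at h
    refine h.trans ?_
    filter_upwards with ω
    simp
  constructor
  · rw [hfun1]
    filter_upwards [pull1, hOverlap] with ω hp hov
    rw [hTcond] at hov
    rw [hp, hTcond, mul_div_cancel_left₀ _ (ne_of_gt hov.1)]
  · rw [hfun0]
    filter_upwards [pull0, hc0, hOverlap] with ω hp hc hov
    have hne : 1 - (μ[T | MeasurableSpace.comap Z inferInstance]) ω ≠ 0 :=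
      ne_of_gt (sub_pos.mpr hov.2)
    rw [hp, hc, mul_div_cancel_left₀ _ hne]
end
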